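/- Let τ₁^(q) ∈ ℙ_int((A∩B)‾) be such that either τ₁ is W-critical or (σ₁, τ₁) ∈ W for some σ₁ with GS(σ₁) ≠ GS(τ₁). Let σ₂^(q−1) ∈ ℙ_int((A∩B)‾) with σ₂ ≠ σ₁ be such that either σ₂ is W-critical or (σ₂, τ₂) ∈ W for some τ₂ with GS(σ₂) ≠ GS(τ₂). Suppose GS(σ₂) is a facet of GS(τ₁). Then there exists exactly one extended W-trajectory from τ₁ to σ₂ in which every simplex except σ₂ has ground simplex equal to GS(τ₁). -/
import Mathlib


open scoped Classical

noncomputable section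

namespace DMT

variable {V : Type*} {U : Type*}

/-- An abstract simplicial complex: a nonempty collection of nonempty finite
sets of vertices that is closed under taking nonempty subsets. -/
def IsComplex (K : Set (Finset V)) : Prop :=
  K.Nonempty ∧ ∀ σ ∈ K, σ.Nonempty ∧ ∀ τ : Finset V, τ ⊆ σ → τ.Nonempty → τ ∈ K

/-- The incidence number `⟨τ, σ⟩` of `σ` with respect to `τ`, where simplices are
oriented by listing their vertices increasingly: it is `(-1)^i` if `σ` is obtained
from `τ` by deleting the `i`-th vertex, and `0` if `σ` is not a facet of `τ`. -/
def incidence [LinearOrder V] (τ σ : Finset V) : ℤ :=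
  if σ ⊆ τ ∧ τ.card = σ.card + 1 then
    ∑ v ∈ τ \ σ, (-1 : ℤ) ^ (τ.filter fun u => u < v).card
  else 0

/-- A discrete vector field on a complex `K`: a set of pairs `(σ, τ)` of simplices of `K`
with `σ` a facet of `τ`, such that every simplex appears in at most one pair. -/
def IsDVF (K : Set (Finset U)) (W : Set (Finset U × Finset U)) : Prop :=
  (∀ p ∈ W, p.1 ∈ K ∧ p.2 ∈ K ∧ p.1 ⊆ p.2 ∧ p.2.card = p.1.card + 1) ∧
  ∀ p ∈ W, ∀ p' ∈ W, (p.1 = p'.1 ∨ p.1 = p'.2 ∨ p.2 = p'.1 ∨ p.2 = p'.2) → p = p'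

/-- A simplex is critical for `W` if it appears in no pair of `W`. -/
def IsCritical (W : Set (Finset U × Finset U)) (σ : Finset U) : Prop :=
  ∀ p ∈ W, p.1 ≠ σ ∧ p.2 ≠ σ

/-- The set of `q`-dimensional `W`-critical simplices of `K`. -/
def critSet (K : Set (Finset U)) (W : Set (Finset U × Finset U)) (q : ℕ) : Set (Finset U) :=
  {σ | σ ∈ K ∧ σ.card = q + 1 ∧ IsCritical W σ}

/-- A `W`-trajectory `τ₀, σ₁, τ₁, …, σ_k, τ_k`. -/
structure Traj (W : Set (Finset U × Finset U)) where
  k : ℕ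
  t : ℕ → Finset U
  s : ℕ → Finset U
  dim_t : ∀ i ≤ k, (t i).card = (t 0).card
  dim_s : ∀ i, 1 ≤ i → i ≤ k → (s i).card + 1 = (t 0).card
  mem : ∀ i, 1 ≤ i → i ≤ k → (s i, t i) ∈ W
  sub : ∀ i, 1 ≤ i → i ≤ k → s i ⊆ t (i - 1)
  nmem : ∀ i, 1 ≤ i → i ≤ k → (s i, t (i - 1)) ∉ W

/-- `W` is acyclic: there is no nontrivial closed `W`-trajectory. -/
def IsAcyclic (W : Set (Finset U × Finset U)) : Prop :=
  ¬ ∃ P : Traj W, 1 < P.k ∧ P.t 0 = P.t P.k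

/-- A gradient vector field on `K`: an acyclic discrete vector field. -/
def IsGVF (K : Set (Finset U)) (W : Set (Finset U × Finset U)) : Prop :=
  IsDVF K W ∧ IsAcyclic W

/-- An extended `W`-trajectory `τ₀, σ₁, τ₁, …, σ_k, τ_k, σ_{k+1}`, with
`(σᵢ, τᵢ) ∈ W` for `1 ≤ i ≤ k`, and `σᵢ ⊆ τ_{i-1}`, `(σᵢ, τ_{i-1}) ∉ W` for
`1 ≤ i ≤ k + 1`.  (The values of `t` and `s` outside the relevant ranges are
normalized to `∅`.) -/
structure ExtTraj (W : Set (Finset U × Finset U)) where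
  k : ℕ
  t : ℕ → Finset U
  s : ℕ → Finset U
  dim_t : ∀ i ≤ k, (t i).card = (t 0).card
  dim_s : ∀ i, 1 ≤ i → i ≤ k + 1 → (s i).card + 1 = (t 0).card
  mem : ∀ i, 1 ≤ i → i ≤ k → (s i, t i) ∈ W
  sub : ∀ i, 1 ≤ i → i ≤ k + 1 → s i ⊆ t (i - 1)
  nmem : ∀ i, 1 ≤ i → i ≤ k + 1 → (s i, t (i - 1)) ∉ W
  pad_t : ∀ i, k < i → t i = ∅
  pad_s : ∀ i, i = 0 ∨ k + 1 < i → s i = ∅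

/-- The weight of an extended trajectory. -/
def ExtTraj.weight [LinearOrder U] {W : Set (Finset U × Finset U)} (P : ExtTraj W) : ℤ :=
  (∏ i ∈ Finset.range P.k,
      -(incidence (P.t i) (P.s (i + 1)) * incidence (P.t (i + 1)) (P.s (i + 1)))) *
    incidence (P.t P.k) (P.s (P.k + 1))

/-- `Γ(τ, σ)`: the extended `W`-trajectories with initial simplex `τ` and terminal
simplex `σ`. -/
def Gamma (W : Set (Finset U × Finset U)) (τ σ : Finset U) : Set (ExtTraj W) :=
  {P | P.t 0 = τ ∧ P.s (P.k + 1) = σ}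

/-- The Thom–Smale boundary coefficient `Σ_{P ∈ Γ(τ,σ)} w(P)`. -/
def tsCoeff [LinearOrder U] (W : Set (Finset U × Finset U)) (τ σ : Finset U) : ℤ :=
  ∑ᶠ P ∈ Gamma W τ σ, ExtTraj.weight P

/-- The copy of a complex under a vertex map. -/
def copy [DecidableEq U] (f : V → U) (K : Set (Finset V)) : Set (Finset U) :=
  {σ | ∃ γ ∈ K, σ = γ.image f}

/-- Pull a simplex of a copy back to the original vertex set. -/
def pull [Fintype V] [DecidableEq U] (f : V → U) (σ : Finset U) : Finset V :=
  Finset.univ.filter fun v => f v ∈ σ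

/-- The ground simplex of a simplex of the prism (with `a`-vertices and `b`-vertices). -/
def GS [Fintype V] [DecidableEq U] (a b : V → U) (σ : Finset U) : Finset V :=
  Finset.univ.filter fun v => a v ∈ σ ∨ b v ∈ σ

/-- The simplex `{a_{i₀}, …, a_{i_r}, b_{i_r}, …, b_{i_q}}` of the prism over
`γ = {v_{i₀} < … < v_{i_q}}`, with pivot `v = v_{i_r}`. -/
def mixA [LinearOrder V] [DecidableEq U] (a b : V → U) (γ : Finset V) (v : V) : Finset U :=
  (γ.filter fun u => u ≤ v).image a ∪ (γ.filter fun u => v ≤ u).image b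

/-- The simplex `{a_{i₀}, …, a_{i_{r-1}}, b_{i_r}, …, b_{i_q}}` of the prism over
`γ`, with pivot `v = v_{i_r}`. -/
def mixB [LinearOrder V] [DecidableEq U] (a b : V → U) (γ : Finset V) (v : V) : Finset U :=
  (γ.filter fun u => u < v).image a ∪ (γ.filter fun u => v ≤ u).image b

/-- `A_γ`. -/
def AsetOf [LinearOrder V] [DecidableEq U] (a b : V → U) (γ : Finset V) : Set (Finset U) :=
  {σ | ∃ v ∈ γ, σ = mixA a b γ v}

/-- `B_γ`. -/
def BsetOf [LinearOrder V] [DecidableEq U] (a b : V → U) (γ : Finset V) : Set (Finset U) :=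
  {σ | ∃ v ∈ γ, σ = mixB a b γ v} ∪ {γ.image a}

/-- `S_γ = A_γ ∪ B_γ`. -/
def SsetOf [LinearOrder V] [DecidableEq U] (a b : V → U) (γ : Finset V) : Set (Finset U) :=
  AsetOf a b γ ∪ BsetOf a b γ

/-- The prism `ℙ(C)` over the complex `C`, realized with `a`-vertices and `b`-vertices. -/
def prism [LinearOrder V] [DecidableEq U] (a b : V → U) (C : Set (Finset V)) :
    Set (Finset U) :=
  ⋃ γ ∈ C, SsetOf a b γ

/-- The interior simplices of the prism. -/
def prismInt [LinearOrder V] [DecidableEq U] (a b : V → U) (C : Set (Finset V)) :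
    Set (Finset U) :=
  prism a b C \ (copy a C ∪ copy b C)

/-- The complex `X̃ = Ā ∪ ℙ((A ∩ B)‾) ∪ B̄`. -/
def tilde [LinearOrder V] [DecidableEq U] (a b : V → U) (A B : Set (Finset V)) :
    Set (Finset U) :=
  copy a A ∪ prism a b (A ∩ B) ∪ copy b B

/-- The prism pairing `𝒱`: for each `γ ∈ C` and `v ∈ γ`, the pair
`([a_{i₀},…,a_{i_{r-1}}, b_{i_r},…,b_{i_q}], [a_{i₀},…,a_{i_r}, b_{i_r},…,b_{i_q}])`. -/
def prismVF [LinearOrder V] [DecidableEq U] (a b : V → U) (C : Set (Finset V)) :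
    Set (Finset U × Finset U) :=
  {p | ∃ γ ∈ C, ∃ v ∈ γ, p = (mixB a b γ v, mixA a b γ v)}

/-- `v` is the minimum vertex of `γ`. -/
def isMin [Preorder V] (γ : Finset V) (v : V) : Prop :=
  v ∈ γ ∧ ∀ u ∈ γ, v ≤ u

/-- The pairing `W'` of the interior simplices of the prism, induced by the gradient
vector field `WC` on the copy (under `c`) of the intersection complex `C`. -/
def WprimeSet [Fintype V] [LinearOrder V] [DecidableEq U] (a b c : V → U)
    (C : Set (Finset V)) (WC : Set (Finset U × Finset U)) : Set (Finset U × Finset U) :=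
  {p | ∃ pr ∈ WC, ∃ v, isMin (pull c pr.1) v ∧
      p = (mixA a b (pull c pr.1) v, mixA a b (pull c pr.2) v)} ∪
  {p | ∃ pr ∈ WC, ∃ v vm am, isMin (pull c pr.2) vm ∧ isMin (pull c pr.1) am ∧
      v ∈ pull c pr.2 ∧ v ≠ vm ∧
      p = (mixB a b (pull c pr.2) v, mixA a b (pull c pr.2) (if v = am then vm else v))} ∪
  {p | ∃ pr ∈ WC, ∃ v am, isMin (pull c pr.1) am ∧ v ∈ pull c pr.1 ∧ v ≠ am ∧
      p = (mixB a b (pull c pr.1) v, mixA a b (pull c pr.1) v)} ∪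
  {p | ∃ γ : Finset V, γ ∈ C ∧ IsCritical WC (γ.image c) ∧
      ∃ v vm, isMin γ vm ∧ v ∈ γ ∧ v ≠ vm ∧ p = (mixB a b γ v, mixA a b γ v)}

/-- The discrete vector field `W = W_Ā ∪ W_B̄ ∪ W'` on `X̃`. -/
def Wfield [Fintype V] [LinearOrder V] [DecidableEq U] (a b c : V → U)
    (C : Set (Finset V)) (WA WB WC : Set (Finset U × Finset U)) :
    Set (Finset U × Finset U) :=
  WA ∪ WB ∪ WprimeSet a b c C WC

/-- Transfer a simplex of the copy under `c` to the corresponding simplex of the copy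
under `f`. -/
def transferMap [Fintype V] [DecidableEq U] (c f : V → U) (σ : Finset U) : Finset U :=
  (pull c σ).image f

/-- A mixed (Mayer–Vietoris) trajectory: a descending extended trajectory
`τ₀, σ₁, τ₁, …, σ_p, τ_p` for `WC` in the copy of the intersection, transferred by
`tr` into another copy, followed by an ascending path
`τ'_p, α_p, τ'_{p+1}, …, α_{p+l-1}, τ'_{p+l}` for `WD`. -/
structure MixTraj (WC WD : Set (Finset U × Finset U)) (tr : Finset U → Finset U) where
  p : ℕ
  l : ℕ
  t : ℕ → Finset U
  s : ℕ → Finset U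
  t' : ℕ → Finset U
  a' : ℕ → Finset U
  dim_t : ∀ i ≤ p, (t i).card = (t 0).card
  dim_s : ∀ i, 1 ≤ i → i ≤ p → (s i).card + 1 = (t 0).card
  dim_t' : ∀ i, p ≤ i → i ≤ p + l → (t' i).card = (t 0).card
  dim_a' : ∀ i, p ≤ i → i < p + l → (a' i).card = (t 0).card + 1
  mem_s : ∀ i, 1 ≤ i → i ≤ p → (s i, t i) ∈ WC
  sub_s : ∀ i, 1 ≤ i → i ≤ p → s i ⊆ t (i - 1)
  nmem_s : ∀ i, 1 ≤ i → i ≤ p → (s i, t (i - 1)) ∉ WC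
  link : t' p = tr (t p)
  mem_a : ∀ i, p ≤ i → i < p + l → (t' i, a' i) ∈ WD
  sub_a : ∀ i, p + 1 ≤ i → i ≤ p + l → t' i ⊆ a' (i - 1)
  nmem_a : ∀ i, p + 1 ≤ i → i ≤ p + l → (t' i, a' (i - 1)) ∉ WD
  pad_t : ∀ i, p < i → t i = ∅
  pad_s : ∀ i, i = 0 ∨ p < i → s i = ∅
  pad_t' : ∀ i, i < p ∨ p + l < i → t' i = ∅
  pad_a' : ∀ i, i < p ∨ p + l ≤ i → a' i = ∅

/-- The product of incidence signs along a mixed trajectory (without the leading sign). -/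
def MixTraj.wcore [LinearOrder U] {WC WD : Set (Finset U × Finset U)}
    {tr : Finset U → Finset U} (P : MixTraj WC WD tr) : ℤ :=
  (∏ i ∈ Finset.range P.p,
      -(incidence (P.t i) (P.s (i + 1)) * incidence (P.t (i + 1)) (P.s (i + 1)))) *
  ∏ i ∈ Finset.range P.l,
      -(incidence (P.a' (P.p + i)) (P.t' (P.p + i)) *
        incidence (P.a' (P.p + i)) (P.t' (P.p + i + 1)))

/-- A Mayer–Vietoris trajectory: one of the five kinds. -/
inductive MVTraj (WA WB WC : Set (Finset U × Finset U)) (trA trB : Finset U → Finset U)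
  | viaA : ExtTraj WA → MVTraj WA WB WC trA trB
  | viaB : ExtTraj WB → MVTraj WA WB WC trA trB
  | viaC : ExtTraj WC → MVTraj WA WB WC trA trB
  | crossA : MixTraj WC WA trA → MVTraj WA WB WC trA trB
  | crossB : MixTraj WC WB trB → MVTraj WA WB WC trA trB

/-- The weight `w_M` of a Mayer–Vietoris trajectory. -/
def MVTraj.wM [LinearOrder U] {WA WB WC : Set (Finset U × Finset U)}
    {trA trB : Finset U → Finset U} : MVTraj WA WB WC trA trB → ℤ
  | .viaA P => P.weight
  | .viaB P => P.weight
  | .viaC P => -P.weight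
  | .crossA P => -P.wcore
  | .crossB P => P.wcore

/-- A Mayer–Vietoris trajectory goes from `β` to `α` (with the required criticality of
the endpoints in the respective copies `Abar`, `Bbar`, `Cbar`). -/
def MVTraj.ends {WA WB WC : Set (Finset U × Finset U)} {trA trB : Finset U → Finset U}
    (Abar Bbar Cbar : Set (Finset U)) :
    MVTraj WA WB WC trA trB → Finset U → Finset U → Prop
  | .viaA T, β, α => T.t 0 = β ∧ T.s (T.k + 1) = α ∧
      β ∈ Abar ∧ IsCritical WA β ∧ α ∈ Abar ∧ IsCritical WA α
  | .viaB T, β, α => T.t 0 = β ∧ T.s (T.k + 1) = α ∧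
      β ∈ Bbar ∧ IsCritical WB β ∧ α ∈ Bbar ∧ IsCritical WB α
  | .viaC T, β, α => T.t 0 = β ∧ T.s (T.k + 1) = α ∧
      β ∈ Cbar ∧ IsCritical WC β ∧ α ∈ Cbar ∧ IsCritical WC α
  | .crossA T, β, α => T.t 0 = β ∧ T.t' (T.p + T.l) = α ∧
      β ∈ Cbar ∧ IsCritical WC β ∧ α ∈ Abar ∧ IsCritical WA α
  | .crossB T, β, α => T.t 0 = β ∧ T.t' (T.p + T.l) = α ∧
      β ∈ Cbar ∧ IsCritical WC β ∧ α ∈ Bbar ∧ IsCritical WB α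

/-- `MV(β, α)`: the set of Mayer–Vietoris trajectories from `β` to `α`. -/
def MVset (WA WB WC : Set (Finset U × Finset U)) (trA trB : Finset U → Finset U)
    (Abar Bbar Cbar : Set (Finset U)) (β α : Finset U) :
    Set (MVTraj WA WB WC trA trB) :=
  {P | MVTraj.ends Abar Bbar Cbar P β α}

/-- The Mayer–Vietoris boundary coefficient `Σ_{P ∈ MV(β,α)} w_M(P)`. -/
def mvCoeff [LinearOrder U] (WA WB WC : Set (Finset U × Finset U))
    (trA trB : Finset U → Finset U) (Abar Bbar Cbar : Set (Finset U))
    (β α : Finset U) : ℤ :=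
  ∑ᶠ P ∈ MVset WA WB WC trA trB Abar Bbar Cbar β α, MVTraj.wM P

/-- The generating sets `D_q(X)`. -/
def Dset (Abar Bbar Cbar : Set (Finset U)) (WA WB WC : Set (Finset U × Finset U)) :
    ℕ → Set (Finset U)
  | 0 => critSet Abar WA 0 ∪ critSet Bbar WB 0
  | (q + 1) => critSet Abar WA (q + 1) ∪ critSet Bbar WB (q + 1) ∪ critSet Cbar WC q

/-- The `q`-dimensional simplices of a complex. -/
def simpSet (K : Set (Finset V)) (q : ℕ) : Set (Finset V) :=
  {σ | σ ∈ K ∧ σ.card = q + 1}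

/-- The boundary homomorphism of a chain complex of free abelian groups, determined by a
matrix of coefficients. -/
def chainBoundary {ι κ : Type*} (coeff : ι → κ → ℤ) : (ι →₀ ℤ) →ₗ[ℤ] (κ →₀ ℤ) :=
  Finsupp.lsum ℤ fun i =>
    LinearMap.toSpanSingleton ℤ (κ →₀ ℤ) (∑ᶠ j : κ, coeff i j • Finsupp.single j 1)

/-- The family of boundary maps of the chain complex of free abelian groups with
generating sets `S q` and boundary coefficients `coeff` (with the convention that the
boundary in degree `0` is the zero map). -/
def fullBoundary {W : Type*} (S : ℕ → Set (Finset W)) (coeff : Finset W → Finset W → ℤ) :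
    ∀ q : ℕ, ((S q : Set (Finset W)) →₀ ℤ) →+ ((S (q - 1) : Set (Finset W)) →₀ ℤ)
  | 0 => 0
  | (q + 1) => (chainBoundary fun (i : (S (q + 1) : Set (Finset W))) (j : (S q : Set (Finset W))) =>
      coeff (i : Finset W) (j : Finset W)).toAddMonoidHom

/-- `ker d ⧸ im d'`. -/
abbrev homologyAt {L M N : Type*} [AddCommGroup L] [AddCommGroup M] [AddCommGroup N]
    (d : M →+ N) (d' : L →+ M) : Type _ :=
  (↥d.ker) ⧸ (AddSubgroup.comap d.ker.subtype d'.range)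

/-- The `q`-th homology group of the chain complex of free abelian groups with
generating sets `S` and boundary coefficients `coeff`. -/
abbrev homologyOf {W : Type*} (S : ℕ → Set (Finset W)) (coeff : Finset W → Finset W → ℤ)
    (q : ℕ) : Type _ :=
  homologyAt (fullBoundary S coeff q) (fullBoundary S coeff (q + 1))

/-- The map `f` from critical simplices of `X̃` to generators of the Mayer–Vietoris
complex: the identity on critical simplices of `Ā` and `B̄`, and the (copy in
`(A ∩ B)‾` of the) ground simplex on interior critical simplices of the prism. -/
def fmap [Fintype V] [LinearOrder V] [DecidableEq U] (a b c : V → U)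
    (C : Set (Finset V)) (τ : Finset U) : Finset U :=
  if τ ∈ prismInt a b C then (GS a b τ).image c else τ

/-- The simplex `[a_{i₀}, b_{i₀}, …, b_{i_{q-1}}]` of the prism over `γ`. -/
def aMinCopy [Fintype V] [LinearOrder V] [DecidableEq U] (a b : V → U) (γ : Finset V) :
    Finset U :=
  (γ.filter fun u => ∀ w ∈ γ, u ≤ w).image a ∪ γ.image b

/-- The map `g` from generators of the Mayer–Vietoris complex to critical simplices of
`X̃`: the identity on critical simplices of `Ā` and `B̄`, and
`[c_{i₀},…,c_{i_{q-1}}] ↦ [a_{i₀}, b_{i₀}, …, b_{i_{q-1}}]` on critical simplices of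
`(A ∩ B)‾`. -/
def gmap [Fintype V] [LinearOrder V] [DecidableEq U] (a b c : V → U)
    (Cbar : Set (Finset U)) (α : Finset U) : Finset U :=
  if α ∈ Cbar then aMinCopy a b (pull c α) else α


section Aux
variable {V : Type*} {U : Type*} [Fintype V] [LinearOrder V] [LinearOrder U]
variable {a b c : V → U} {γ δ : Finset V} {v w x : V}

lemma mem_mixA {y : U} :
    y ∈ mixA a b γ v ↔ (∃ u ∈ γ, u ≤ v ∧ y = a u) ∨ (∃ u ∈ γ, v ≤ u ∧ y = b u) := by
  simp [mixA, Finset.mem_union, Finset.mem_image, Finset.mem_filter]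
  constructor
  · rintro (⟨u, ⟨hu, huv⟩, rfl⟩ | ⟨u, ⟨hu, huv⟩, rfl⟩)
    · exact Or.inl ⟨u, hu, huv, rfl⟩
    · exact Or.inr ⟨u, hu, huv, rfl⟩
  · rintro (⟨u, hu, huv, rfl⟩ | ⟨u, hu, huv, rfl⟩)
    · exact Or.inl ⟨u, ⟨hu, huv⟩, rfl⟩
    · exact Or.inr ⟨u, ⟨hu, huv⟩, rfl⟩

lemma mem_mixB {y : U} :
    y ∈ mixB a b γ v ↔ (∃ u ∈ γ, u < v ∧ y = a u) ∨ (∃ u ∈ γ, v ≤ u ∧ y = b u) := by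
  simp [mixB, Finset.mem_union, Finset.mem_image, Finset.mem_filter]
  constructor
  · rintro (⟨u, ⟨hu, huv⟩, rfl⟩ | ⟨u, ⟨hu, huv⟩, rfl⟩)
    · exact Or.inl ⟨u, hu, huv, rfl⟩
    · exact Or.inr ⟨u, hu, huv, rfl⟩
  · rintro (⟨u, hu, huv, rfl⟩ | ⟨u, hu, huv, rfl⟩)
    · exact Or.inl ⟨u, ⟨hu, huv⟩, rfl⟩
    · exact Or.inr ⟨u, ⟨hu, huv⟩, rfl⟩

lemma mem_GS {σ : Finset U} : v ∈ GS a b σ ↔ a v ∈ σ ∨ b v ∈ σ := by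
  simp [GS]

section Inj
variable (ha : Function.Injective a) (hb : Function.Injective b)
  (hab : ∀ u v : V, a u ≠ b v)
include ha hb hab

lemma GS_mixA (hv : v ∈ γ) : GS a b (mixA a b γ v) = γ := by
  ext w
  rw [mem_GS]
  constructor
  · rintro (h | h) <;> rw [mem_mixA] at h
    · rcases h with ⟨u, hu, _, h⟩ | ⟨u, _, _, h⟩
      · exact ha h ▸ hu
      · exact absurd h (hab _ _)
    · rcases h with ⟨u, _, _, h⟩ | ⟨u, hu, _, h⟩
      · exact absurd h.symm (hab _ _)
      · exact hb h ▸ hu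
  · intro hw
    rcases le_total w v with h | h
    · exact Or.inl (mem_mixA.2 (Or.inl ⟨w, hw, h, rfl⟩))
    · exact Or.inr (mem_mixA.2 (Or.inr ⟨w, hw, h, rfl⟩))

lemma GS_mixB (hv : v ∈ γ) : GS a b (mixB a b γ v) = γ := by
  ext w
  rw [mem_GS]
  constructor
  · rintro (h | h) <;> rw [mem_mixB] at h
    · rcases h with ⟨u, hu, _, h⟩ | ⟨u, _, _, h⟩
      · exact ha h ▸ hu
      · exact absurd h (hab _ _)
    · rcases h with ⟨u, _, _, h⟩ | ⟨u, hu, _, h⟩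
      · exact absurd h.symm (hab _ _)
      · exact hb h ▸ hu
  · intro hw
    rcases lt_or_ge w v with h | h
    · exact Or.inl (mem_mixB.2 (Or.inl ⟨w, hw, h, rfl⟩))
    · exact Or.inr (mem_mixB.2 (Or.inr ⟨w, hw, h, rfl⟩))

lemma GS_image_a : GS a b (γ.image a) = γ := by
  ext w
  rw [mem_GS]
  simp only [Finset.mem_image]
  constructor
  · rintro (⟨u, hu, h⟩ | ⟨u, hu, h⟩)
    · exact ha h ▸ hu
    · exact absurd h (hab _ _)
  · exact fun hw => Or.inl ⟨w, hw, rfl⟩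

lemma GS_image_b : GS a b (γ.image b) = γ := by
  ext w
  rw [mem_GS]
  simp only [Finset.mem_image]
  constructor
  · rintro (⟨u, hu, h⟩ | ⟨u, hu, h⟩)
    · exact absurd h.symm (hab _ _)
    · exact hb h ▸ hu
  · exact fun hw => Or.inr ⟨w, hw, rfl⟩

lemma card_mixA (hv : v ∈ γ) : (mixA a b γ v).card = γ.card + 1 := by
  have hd : Disjoint ((γ.filter fun u => u ≤ v).image a) ((γ.filter fun u => v ≤ u).image b) := by
    rw [Finset.disjoint_left]
    rintro y hy hy'
    simp only [Finset.mem_image] at hy hy'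
    obtain ⟨u, _, rfl⟩ := hy
    obtain ⟨u', _, h⟩ := hy'
    exact hab _ _ h.symm
  rw [mixA, Finset.card_union_of_disjoint hd, Finset.card_image_of_injective _ ha,
    Finset.card_image_of_injective _ hb]
  have h1 : (γ.filter fun u => u ≤ v) ∪ (γ.filter fun u => v ≤ u) = γ := by
    ext u; simp only [Finset.mem_union, Finset.mem_filter]
    constructor
    · rintro (⟨h, _⟩ | ⟨h, _⟩) <;> exact h
    · intro hu; rcases le_total u v with h | h
      · exact Or.inl ⟨hu, h⟩
      · exact Or.inr ⟨hu, h⟩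
  have h2 : (γ.filter fun u => u ≤ v) ∩ (γ.filter fun u => v ≤ u) = {v} := by
    ext u; simp only [Finset.mem_inter, Finset.mem_filter, Finset.mem_singleton]
    constructor
    · rintro ⟨⟨_, h1⟩, ⟨_, h2⟩⟩; exact le_antisymm h1 h2
    · rintro rfl; exact ⟨⟨hv, le_rfl⟩, hv, le_rfl⟩
  have := Finset.card_union_add_card_inter (γ.filter fun u => u ≤ v) (γ.filter fun u => v ≤ u)
  rw [h1, h2] at this
  simp at this
  omega

lemma card_mixB (hv : v ∈ γ) : (mixB a b γ v).card = γ.card := by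
  have hd : Disjoint ((γ.filter fun u => u < v).image a) ((γ.filter fun u => v ≤ u).image b) := by
    rw [Finset.disjoint_left]
    rintro y hy hy'
    simp only [Finset.mem_image] at hy hy'
    obtain ⟨u, _, rfl⟩ := hy
    obtain ⟨u', _, h⟩ := hy'
    exact hab _ _ h.symm
  rw [mixB, Finset.card_union_of_disjoint hd, Finset.card_image_of_injective _ ha,
    Finset.card_image_of_injective _ hb]
  have h1 : (γ.filter fun u => u < v) ∪ (γ.filter fun u => v ≤ u) = γ := by
    ext u; simp only [Finset.mem_union, Finset.mem_filter]
    constructor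
    · rintro (⟨h, _⟩ | ⟨h, _⟩) <;> exact h
    · intro hu; rcases lt_or_ge u v with h | h
      · exact Or.inl ⟨hu, h⟩
      · exact Or.inr ⟨hu, h⟩
  have h2 : (γ.filter fun u => u < v) ∩ (γ.filter fun u => v ≤ u) = ∅ := by
    ext u; simp only [Finset.mem_inter, Finset.mem_filter, Finset.notMem_empty, iff_false]
    rintro ⟨⟨_, h1⟩, ⟨_, h2⟩⟩; exact absurd h1 (not_lt.2 h2)
  have := Finset.card_union_add_card_inter (γ.filter fun u => u < v) (γ.filter fun u => v ≤ u)
  rw [h1, h2] at this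
  simp at this
  omega

end Inj
end Aux
section Aux2
set_option linter.unusedSectionVars false
set_option linter.unusedVariables false
variable {V : Type*} {U : Type*} [Fintype V] [LinearOrder V] [LinearOrder U]
variable {a b c : V → U} {γ γ' δ : Finset V} {u v w v' : V}
variable (ha : Function.Injective a) (hb : Function.Injective b)
  (hab : ∀ u v : V, a u ≠ b v)
include ha hb hab

lemma a_mem_mixA_iff : a u ∈ mixA a b γ v ↔ u ∈ γ ∧ u ≤ v := by
  rw [mem_mixA]
  constructor
  · rintro (⟨t, ht, htv, h⟩ | ⟨t, ht, htv, h⟩)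
    · obtain rfl := ha h; exact ⟨ht, htv⟩
    · exact absurd h (hab _ _)
  · rintro ⟨h1, h2⟩; exact Or.inl ⟨u, h1, h2, rfl⟩

lemma b_mem_mixA_iff : b u ∈ mixA a b γ v ↔ u ∈ γ ∧ v ≤ u := by
  rw [mem_mixA]
  constructor
  · rintro (⟨t, ht, htv, h⟩ | ⟨t, ht, htv, h⟩)
    · exact absurd h.symm (hab _ _)
    · obtain rfl := hb h; exact ⟨ht, htv⟩
  · rintro ⟨h1, h2⟩; exact Or.inr ⟨u, h1, h2, rfl⟩

lemma a_mem_mixB_iff : a u ∈ mixB a b γ v ↔ u ∈ γ ∧ u < v := by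
  rw [mem_mixB]
  constructor
  · rintro (⟨t, ht, htv, h⟩ | ⟨t, ht, htv, h⟩)
    · obtain rfl := ha h; exact ⟨ht, htv⟩
    · exact absurd h (hab _ _)
  · rintro ⟨h1, h2⟩; exact Or.inl ⟨u, h1, h2, rfl⟩

lemma b_mem_mixB_iff : b u ∈ mixB a b γ v ↔ u ∈ γ ∧ v ≤ u := by
  rw [mem_mixB]
  constructor
  · rintro (⟨t, ht, htv, h⟩ | ⟨t, ht, htv, h⟩)
    · exact absurd h.symm (hab _ _)
    · obtain rfl := hb h; exact ⟨ht, htv⟩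
  · rintro ⟨h1, h2⟩; exact Or.inr ⟨u, h1, h2, rfl⟩

lemma a_notMem_image_b : a u ∉ γ.image b := by
  simp only [Finset.mem_image, not_exists]
  rintro t ⟨_, h⟩
  exact hab _ _ h.symm

lemma b_notMem_image_a : b u ∉ γ.image a := by
  simp only [Finset.mem_image, not_exists]
  rintro t ⟨_, h⟩
  exact hab _ _ h

lemma mixA_inj (hv : v ∈ γ) (hv' : v' ∈ γ') (h : mixA a b γ v = mixA a b γ' v') :
    γ = γ' ∧ v = v' := by
  have hγ : γ = γ' := by
    rw [← GS_mixA ha hb hab hv, ← GS_mixA ha hb hab hv', h]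
  subst hγ
  refine ⟨rfl, ?_⟩
  have h1 : a v' ∈ mixA a b γ v := h ▸ (a_mem_mixA_iff ha hb hab).2 ⟨hv', le_rfl⟩
  have h2 : b v' ∈ mixA a b γ v := h ▸ (b_mem_mixA_iff ha hb hab).2 ⟨hv', le_rfl⟩
  have ha1 := ((a_mem_mixA_iff ha hb hab).1 h1).2
  have hb1 := ((b_mem_mixA_iff ha hb hab).1 h2).2
  exact le_antisymm hb1 ha1

lemma mixB_inj (hv : v ∈ γ) (hv' : v' ∈ γ') (h : mixB a b γ v = mixB a b γ' v') :
    γ = γ' ∧ v = v' := by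
  have hγ : γ = γ' := by
    rw [← GS_mixB ha hb hab hv, ← GS_mixB ha hb hab hv', h]
  subst hγ
  refine ⟨rfl, ?_⟩
  have h1 : b v' ∈ mixB a b γ v := h ▸ (b_mem_mixB_iff ha hb hab).2 ⟨hv', le_rfl⟩
  have h2 : b v ∈ mixB a b γ v' := h ▸ (b_mem_mixB_iff ha hb hab).2 ⟨hv, le_rfl⟩
  exact le_antisymm ((b_mem_mixB_iff ha hb hab).1 h1).2 ((b_mem_mixB_iff ha hb hab).1 h2).2

lemma mixA_ne_mixB (hv : v ∈ γ) : mixA a b γ v ≠ mixB a b γ' v' := by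
  intro h
  have h1 : a v ∈ mixB a b γ' v' := h ▸ (a_mem_mixA_iff ha hb hab).2 ⟨hv, le_rfl⟩
  have h2 : b v ∈ mixB a b γ' v' := h ▸ (b_mem_mixA_iff ha hb hab).2 ⟨hv, le_rfl⟩
  have := ((a_mem_mixB_iff ha hb hab).1 h1).2
  have := ((b_mem_mixB_iff ha hb hab).1 h2).2
  exact absurd this (not_le.2 (by assumption))

lemma image_a_ne_mixA (hv : v ∈ γ') : δ.image a ≠ mixA a b γ' v := by
  intro h
  have : b v ∈ δ.image a := h ▸ (b_mem_mixA_iff ha hb hab).2 ⟨hv, le_rfl⟩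
  exact b_notMem_image_a ha hb hab this

lemma image_a_ne_mixB (hv : v ∈ γ') : δ.image a ≠ mixB a b γ' v := by
  intro h
  have : b v ∈ δ.image a := h ▸ (b_mem_mixB_iff ha hb hab).2 ⟨hv, le_rfl⟩
  exact b_notMem_image_a ha hb hab this

lemma image_b_ne_mixA (hv : v ∈ γ') : δ.image b ≠ mixA a b γ' v := by
  intro h
  have : a v ∈ δ.image b := h ▸ (a_mem_mixA_iff ha hb hab).2 ⟨hv, le_rfl⟩
  exact a_notMem_image_b ha hb hab this

lemma image_b_ne_mixB (hv : v ∈ γ') (hlt : u ∈ γ') (huv : u < v) :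
    δ.image b ≠ mixB a b γ' v := by
  intro h
  have : a u ∈ δ.image b := h ▸ (a_mem_mixB_iff ha hb hab).2 ⟨hlt, huv⟩
  exact a_notMem_image_b ha hb hab this

lemma mixB_min_eq_image_b (h : ∀ u ∈ γ, v ≤ u) : mixB a b γ v = γ.image b := by
  ext y
  rw [mem_mixB]
  simp only [Finset.mem_image]
  constructor
  · rintro (⟨t, ht, htv, rfl⟩ | ⟨t, ht, _, rfl⟩)
    · exact absurd htv (not_lt.2 (h t ht))
    · exact ⟨t, ht, rfl⟩
  · rintro ⟨t, ht, rfl⟩; exact Or.inr ⟨t, ht, h t ht, rfl⟩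

lemma mixA_erase_a (hv : v ∈ γ) : (mixA a b γ v).erase (a v) = mixB a b γ v := by
  ext y
  rw [Finset.mem_erase, mem_mixA, mem_mixB]
  constructor
  · rintro ⟨hne, (⟨t, ht, htv, rfl⟩ | ⟨t, ht, htv, rfl⟩)⟩
    · exact Or.inl ⟨t, ht, lt_of_le_of_ne htv (fun h => hne (by rw [h])), rfl⟩
    · exact Or.inr ⟨t, ht, htv, rfl⟩
  · rintro (⟨t, ht, htv, rfl⟩ | ⟨t, ht, htv, rfl⟩)
    · exact ⟨fun h => absurd (ha h) (ne_of_lt htv), Or.inl ⟨t, ht, le_of_lt htv, rfl⟩⟩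
    · exact ⟨fun h => hab _ _ h.symm, Or.inr ⟨t, ht, htv, rfl⟩⟩

lemma mixA_erase_b_max (hv : v ∈ γ) (hmax : ∀ u ∈ γ, u ≤ v) :
    (mixA a b γ v).erase (b v) = γ.image a := by
  ext y
  rw [Finset.mem_erase, mem_mixA]
  simp only [Finset.mem_image]
  constructor
  · rintro ⟨hne, (⟨t, ht, htv, rfl⟩ | ⟨t, ht, htv, rfl⟩)⟩
    · exact ⟨t, ht, rfl⟩
    · exact absurd (congrArg b (le_antisymm (hmax t ht) htv)) hne
  · rintro ⟨t, ht, rfl⟩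
    exact ⟨hab _ _, Or.inl ⟨t, ht, hmax t ht, rfl⟩⟩

lemma mixA_erase_b_succ (hv : v ∈ γ) (hu : u ∈ γ) (hvu : v < u)
    (hmin : ∀ t ∈ γ, t < u → t ≤ v) :
    (mixA a b γ v).erase (b v) = mixB a b γ u := by
  ext y
  rw [Finset.mem_erase, mem_mixA, mem_mixB]
  constructor
  · rintro ⟨hne, (⟨t, ht, htv, rfl⟩ | ⟨t, ht, htv, rfl⟩)⟩
    · exact Or.inl ⟨t, ht, lt_of_le_of_lt htv hvu, rfl⟩
    · refine Or.inr ⟨t, ht, ?_, rfl⟩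
      by_contra hlt
      exact hne (congrArg b (le_antisymm (hmin t ht (not_le.1 hlt)) htv))
  · rintro (⟨t, ht, htv, rfl⟩ | ⟨t, ht, htv, rfl⟩)
    · exact ⟨fun h => hab _ _ h, Or.inl ⟨t, ht, hmin t ht htv, rfl⟩⟩
    · refine ⟨?_, Or.inr ⟨t, ht, le_of_lt (lt_of_lt_of_le hvu htv), rfl⟩⟩
      intro h
      obtain rfl := hb h
      exact absurd htv (not_le.2 hvu)

end Aux2
section Aux3
set_option linter.unusedSectionVars false
set_option linter.unusedVariables false
variable {V : Type*} {U : Type*} [Fintype V] [LinearOrder V] [LinearOrder U]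
variable {a b c : V → U} {γ γ' δ : Finset V} {u v w v' : V}

lemma pull_mono {σ τ : Finset U} (h : σ ⊆ τ) : pull c σ ⊆ pull c τ := by
  intro v hv
  simp only [pull, Finset.mem_filter, Finset.mem_univ, true_and] at hv ⊢
  exact h hv

lemma pull_image_self (hc : Function.Injective c) (ε : Finset V) :
    pull c (ε.image c) = ε := by
  ext v
  simp only [pull, Finset.mem_filter, Finset.mem_univ, true_and, Finset.mem_image]
  constructor
  · rintro ⟨t, ht, h⟩; exact hc h ▸ ht
  · exact fun h => ⟨v, h, rfl⟩

section Inj3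
variable (ha : Function.Injective a) (hb : Function.Injective b)
  (hab : ∀ u v : V, a u ≠ b v)
include ha hb hab

lemma mixA_subset_mixA (hδγ : δ ⊆ γ) (hw : w ∈ δ) : mixA a b δ w ⊆ mixA a b γ w := by
  intro y hy
  rw [mem_mixA] at hy ⊢
  rcases hy with ⟨t, ht, htv, rfl⟩ | ⟨t, ht, htv, rfl⟩
  · exact Or.inl ⟨t, hδγ ht, htv, rfl⟩
  · exact Or.inr ⟨t, hδγ ht, htv, rfl⟩

lemma pivot_eq_of_mixA_subset (hδγ : δ ⊆ γ) (hw : w ∈ δ) (hv : v ∈ γ)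
    (h : mixA a b δ w ⊆ mixA a b γ v) : w = v := by
  have h1 : a w ∈ mixA a b γ v := h ((a_mem_mixA_iff ha hb hab).2 ⟨hw, le_rfl⟩)
  have h2 : b w ∈ mixA a b γ v := h ((b_mem_mixA_iff ha hb hab).2 ⟨hw, le_rfl⟩)
  exact le_antisymm ((a_mem_mixA_iff ha hb hab).1 h1).2 ((b_mem_mixA_iff ha hb hab).1 h2).2

lemma mixB_subset_mixA_self (hu : u ∈ γ) (hv : v ∈ γ) (h1 : v ≤ u)
    (h2 : ∀ t ∈ γ, t < u → t ≤ v) : mixB a b γ u ⊆ mixA a b γ v := by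
  intro y hy
  rw [mem_mixB] at hy
  rw [mem_mixA]
  rcases hy with ⟨t, ht, htv, rfl⟩ | ⟨t, ht, htv, rfl⟩
  · exact Or.inl ⟨t, ht, h2 t ht htv, rfl⟩
  · exact Or.inr ⟨t, ht, le_trans h1 htv, rfl⟩

/-- The classification of the facets of `mixA γ v` having ground simplex `γ`. -/
lemma facet_of_mixA (hv : v ∈ γ) {ρ : Finset U} (hsub : ρ ⊆ mixA a b γ v)
    (hcard : ρ.card + 1 = (mixA a b γ v).card) (hGS : GS a b ρ = γ) :
    ρ = mixB a b γ v ∨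
      (∃ u ∈ γ, v < u ∧ (∀ t ∈ γ, t < u → t ≤ v) ∧ ρ = mixB a b γ u) ∨
      ((∀ u ∈ γ, u ≤ v) ∧ ρ = γ.image a) := by
  -- find the erased vertex
  have hsd : ((mixA a b γ v) \ ρ).card = 1 := by
    rw [Finset.card_sdiff_of_subset hsub]; omega
  obtain ⟨y, hy⟩ := Finset.card_eq_one.1 hsd
  have hyT : y ∈ mixA a b γ v := by
    have : y ∈ (mixA a b γ v) \ ρ := hy ▸ Finset.mem_singleton_self y
    exact (Finset.mem_sdiff.1 this).1
  have hρ : ρ = (mixA a b γ v).erase y := by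
    ext x
    rw [Finset.mem_erase]
    constructor
    · intro hx
      refine ⟨?_, hsub hx⟩
      rintro rfl
      have : x ∈ (mixA a b γ v) \ ρ := hy ▸ Finset.mem_singleton_self x
      exact (Finset.mem_sdiff.1 this).2 hx
    · rintro ⟨hxy, hxT⟩
      by_contra hxρ
      have : x ∈ (mixA a b γ v) \ ρ := Finset.mem_sdiff.2 ⟨hxT, hxρ⟩
      rw [hy, Finset.mem_singleton] at this
      exact hxy this
  rw [mem_mixA] at hyT
  rcases hyT with ⟨t, ht, htv, rfl⟩ | ⟨t, ht, htv, rfl⟩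
  · -- y = a t, t ≤ v
    rcases eq_or_lt_of_le htv with rfl | hlt
    · exact Or.inl (by rw [hρ, mixA_erase_a ha hb hab hv])
    · -- t < v: contradiction with GS
      exfalso
      have htGS : t ∈ GS a b ρ := hGS ▸ ht
      rw [mem_GS] at htGS
      rcases htGS with h | h
      · rw [hρ, Finset.mem_erase] at h
        exact h.1 rfl
      · have := ((b_mem_mixA_iff ha hb hab).1 (hsub h)).2
        exact absurd this (not_le.2 hlt)
  · -- y = b t, v ≤ t
    rcases eq_or_lt_of_le htv with rfl | hlt
    · -- y = b v
      by_cases hex : ∃ u ∈ γ, v < u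
      · obtain ⟨u₀, hu₀, hlt₀, hmin₀⟩ : ∃ u₀ ∈ γ, v < u₀ ∧ ∀ t' ∈ γ, t' < u₀ → t' ≤ v := by
          obtain ⟨u, hu, hul⟩ := hex
          have hne : (γ.filter fun x => v < x).Nonempty := ⟨u, Finset.mem_filter.2 ⟨hu, hul⟩⟩
          refine ⟨(γ.filter fun x => v < x).min' hne, ?_, ?_, ?_⟩
          · exact (Finset.mem_filter.1 ((γ.filter fun x => v < x).min'_mem hne)).1
          · exact (Finset.mem_filter.1 ((γ.filter fun x => v < x).min'_mem hne)).2
          · intro t' ht' hlt'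
            by_contra hgt
            have : (γ.filter fun x => v < x).min' hne ≤ t' :=
              Finset.min'_le _ _ (Finset.mem_filter.2 ⟨ht', not_le.1 hgt⟩)
            exact absurd hlt' (not_lt.2 this)
        refine Or.inr (Or.inl ⟨u₀, hu₀, hlt₀, hmin₀, ?_⟩)
        rw [hρ, mixA_erase_b_succ ha hb hab hv hu₀ hlt₀ hmin₀]
      · push_neg at hex
        refine Or.inr (Or.inr ⟨hex, ?_⟩)
        rw [hρ, mixA_erase_b_max ha hb hab hv (hex)]
    · -- v < t : contradiction with GS
      exfalso
      have htGS : t ∈ GS a b ρ := hGS ▸ ht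
      rw [mem_GS] at htGS
      rcases htGS with h | h
      · have := ((a_mem_mixA_iff ha hb hab).1 (hsub h)).2
        exact absurd this (not_le.2 hlt)
      · rw [hρ, Finset.mem_erase] at h
        exact h.1 rfl

end Inj3

/-- The pivot enumeration of a finite set. -/
def pivFn (γ : Finset V) (hne : γ.Nonempty) (m : ℕ) : V :=
  if h : m < γ.card then (γ.orderIsoOfFin rfl ⟨m, h⟩ : V) else γ.min' hne

lemma pivFn_eq {γ : Finset V} (hne : γ.Nonempty) {m : ℕ} (h : m < γ.card) :
    pivFn γ hne m = (γ.orderIsoOfFin rfl ⟨m, h⟩ : V) := dif_pos h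

lemma pivFn_mem {γ : Finset V} (hne : γ.Nonempty) (m : ℕ) : pivFn γ hne m ∈ γ := by
  unfold pivFn
  split
  · exact (γ.orderIsoOfFin rfl _).2
  · exact γ.min'_mem hne

lemma pivFn_lt {γ : Finset V} (hne : γ.Nonempty) {m m' : ℕ} (h : m < m') (h' : m' < γ.card) :
    pivFn γ hne m < pivFn γ hne m' := by
  rw [pivFn_eq hne (lt_trans h h'), pivFn_eq hne h']
  exact Subtype.coe_lt_coe.2 ((γ.orderIsoOfFin rfl).strictMono (by exact h))

lemma pivFn_surj {γ : Finset V} (hne : γ.Nonempty) (hv : v ∈ γ) :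
    ∃ m, m < γ.card ∧ v = pivFn γ hne m := by
  obtain ⟨i, hi⟩ : ∃ i, (γ.orderIsoOfFin rfl) i = ⟨v, hv⟩ :=
    ⟨(γ.orderIsoOfFin rfl).symm ⟨v, hv⟩, (γ.orderIsoOfFin rfl).apply_symm_apply _⟩
  exact ⟨i.1, i.2, by rw [pivFn_eq hne i.2]; cases i; rw [hi]⟩

lemma pivFn_zero {γ : Finset V} (hne : γ.Nonempty) : pivFn γ hne 0 = γ.min' hne := by
  have h0 : 0 < γ.card := Finset.card_pos.2 hne
  refine le_antisymm ?_ (γ.min'_le _ (pivFn_mem hne 0))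
  obtain ⟨m, hm, hmin⟩ := pivFn_surj hne (γ.min'_mem hne)
  rw [hmin]
  rcases Nat.eq_zero_or_pos m with rfl | hpos
  · exact le_rfl
  · exact le_of_lt (pivFn_lt hne hpos hm)

lemma pivFn_between {γ : Finset V} (hne : γ.Nonempty) {j : ℕ} (hj : j + 1 < γ.card)
    (ht : w ∈ γ) (hlt : w < pivFn γ hne (j + 1)) : w ≤ pivFn γ hne j := by
  obtain ⟨m, hm, rfl⟩ := pivFn_surj hne ht
  by_contra hgt
  have h1 : j < m := by
    by_contra h
    rcases Nat.lt_or_ge m (j) with h' | h'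
    · exact hgt (le_of_lt (pivFn_lt hne h' (by omega)))
    · have : m = j := by omega
      subst this; exact hgt le_rfl
  have h2 : m < j + 1 := by
    by_contra h
    rcases Nat.lt_or_ge (j+1) m with h' | h'
    · exact absurd hlt (not_lt.2 (le_of_lt (pivFn_lt hne h' hm)))
    · have : m = j + 1 := by omega
      subst this; exact absurd hlt (lt_irrefl _)
  omega

lemma pivFn_inj {γ : Finset V} (hne : γ.Nonempty) {m m' : ℕ} (hm : m < γ.card)
    (hm' : m' < γ.card) (h : pivFn γ hne m = pivFn γ hne m') : m = m' := by
  rcases Nat.lt_trichotomy m m' with hlt | heq | hgt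
  · exact absurd h (ne_of_lt (pivFn_lt hne hlt hm'))
  · exact heq
  · exact absurd h.symm (ne_of_lt (pivFn_lt hne hgt hm))

lemma pivFn_succ_of_adjacent {γ : Finset V} (hne : γ.Nonempty) {j : ℕ} (hj : j < γ.card)
    (hu : u ∈ γ) (hlt : pivFn γ hne j < u) (hmin : ∀ t ∈ γ, t < u → t ≤ pivFn γ hne j) :
    j + 1 < γ.card ∧ u = pivFn γ hne (j + 1) := by
  obtain ⟨m, hm, rfl⟩ := pivFn_surj hne hu
  have hjm : j < m := by
    by_contra h
    push_neg at h
    rcases eq_or_lt_of_le h with rfl | h'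
    · exact absurd hlt (lt_irrefl _)
    · exact absurd hlt (not_lt.2 (le_of_lt (pivFn_lt hne h' hj)))
  have : m = j + 1 := by
    by_contra h
    have hj1 : j + 1 < m := by omega
    have h1 : pivFn γ hne (j+1) < pivFn γ hne m := pivFn_lt hne hj1 hm
    have h2 : pivFn γ hne (j+1) ≤ pivFn γ hne j := hmin _ (pivFn_mem hne _) h1
    exact absurd h2 (not_le.2 (pivFn_lt hne (by omega) (by omega)))
  subst this
  exact ⟨hm, rfl⟩

end Aux3
section Aux4
set_option linter.unusedSectionVars false
set_option linter.unusedVariables false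
variable {V : Type*} {U : Type*} [Fintype V] [LinearOrder V] [LinearOrder U]
variable {a b c : V → U} {γ γ' δ : Finset V} {u v w v' : V}
variable {A B C : Set (Finset V)} {WA WB WC : Set (Finset U × Finset U)}
variable {pr : Finset U × Finset U}

lemma isMin_min' {γ : Finset V} (hne : γ.Nonempty) : isMin γ (γ.min' hne) :=
  ⟨γ.min'_mem hne, fun u hu => γ.min'_le u hu⟩

lemma isMin_eq_min' {γ : Finset V} (hne : γ.Nonempty) (h : isMin γ v) : v = γ.min' hne :=
  le_antisymm (h.2 _ (γ.min'_mem hne)) (γ.min'_le _ h.1)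

section WCfacts
variable (hc : Function.Injective c) (hWCd : IsDVF (copy c C) WC)
  (hCne : ∀ ε ∈ C, ε.Nonempty)
include hc hWCd hCne

lemma WC_pull_spec (hpr : pr ∈ WC) :
    pull c pr.1 ⊆ pull c pr.2 ∧ (pull c pr.2).card = (pull c pr.1).card + 1 ∧
    (pull c pr.1).Nonempty ∧ (pull c pr.2).Nonempty ∧
    (pull c pr.1).image c = pr.1 ∧ (pull c pr.2).image c = pr.2 ∧
    pull c pr.1 ∈ C ∧ pull c pr.2 ∈ C := by
  obtain ⟨h1, h2, h3, h4⟩ := hWCd.1 pr hpr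
  obtain ⟨ε1, hε1, he1⟩ := h1
  obtain ⟨ε2, hε2, he2⟩ := h2
  rw [he1] at h3 h4 ⊢
  rw [he2] at h3 h4 ⊢
  rw [pull_image_self hc, pull_image_self hc]
  refine ⟨?_, ?_, hCne _ hε1, hCne _ hε2, rfl, rfl, hε1, hε2⟩
  · intro x hx
    have : c x ∈ ε2.image c := h3 (Finset.mem_image_of_mem c hx)
    obtain ⟨y, hy, hxy⟩ := Finset.mem_image.1 this
    exact hc hxy ▸ hy
  · rwa [Finset.card_image_of_injective _ hc, Finset.card_image_of_injective _ hc] at h4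

lemma roleEx12 {pr' : Finset U × Finset U} (hpr : pr ∈ WC) (hpr' : pr' ∈ WC)
    (h : pull c pr.1 = pull c pr'.2) : False := by
  have h1 := (WC_pull_spec hc hWCd hCne hpr).2.2.2.2.1
  have h2 := (WC_pull_spec hc hWCd hCne hpr').2.2.2.2.2.1
  have : pr.1 = pr'.2 := by rw [← h1, ← h2, h]
  have heq := hWCd.2 pr hpr pr' hpr' (Or.inr (Or.inl this))
  subst heq
  have hcard := (hWCd.1 pr hpr).2.2.2
  rw [← this] at hcard
  omega

lemma roleEx22 {pr' : Finset U × Finset U} (hpr : pr ∈ WC) (hpr' : pr' ∈ WC)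
    (h : pull c pr.2 = pull c pr'.2) : pr = pr' := by
  have h1 := (WC_pull_spec hc hWCd hCne hpr).2.2.2.2.2.1
  have h2 := (WC_pull_spec hc hWCd hCne hpr').2.2.2.2.2.1
  have : pr.2 = pr'.2 := by rw [← h1, ← h2, h]
  exact hWCd.2 pr hpr pr' hpr' (Or.inr (Or.inr (Or.inr this)))

lemma roleEx11 {pr' : Finset U × Finset U} (hpr : pr ∈ WC) (hpr' : pr' ∈ WC)
    (h : pull c pr.1 = pull c pr'.1) : pr = pr' := by
  have h1 := (WC_pull_spec hc hWCd hCne hpr).2.2.2.2.1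
  have h2 := (WC_pull_spec hc hWCd hCne hpr').2.2.2.2.1
  have : pr.1 = pr'.1 := by rw [← h1, ← h2, h]
  exact hWCd.2 pr hpr pr' hpr' (Or.inl this)

lemma critEx1 (hcrit : IsCritical WC (γ.image c)) (hpr : pr ∈ WC)
    (h : pull c pr.1 = γ) : False := by
  have h1 := (WC_pull_spec hc hWCd hCne hpr).2.2.2.2.1
  exact (hcrit pr hpr).1 (by rw [← h1, h])

lemma critEx2 (hcrit : IsCritical WC (γ.image c)) (hpr : pr ∈ WC)
    (h : pull c pr.2 = γ) : False := by
  have h1 := (WC_pull_spec hc hWCd hCne hpr).2.2.2.2.2.1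
  exact (hcrit pr hpr).2 (by rw [← h1, h])

end WCfacts

section Wmem
variable (hpr : pr ∈ WC)

lemma mem_W_type1 (hpr : pr ∈ WC) {vm : V} (hvm : isMin (pull c pr.1) vm) :
    (mixA a b (pull c pr.1) vm, mixA a b (pull c pr.2) vm) ∈ Wfield a b c C WA WB WC :=
  Or.inr (Or.inl (Or.inl (Or.inl ⟨pr, hpr, vm, hvm, rfl⟩)))

lemma mem_W_type2 (hpr : pr ∈ WC) {vm am : V} (hvm : isMin (pull c pr.2) vm)
    (ham : isMin (pull c pr.1) am) (hv : v ∈ pull c pr.2) (hne : v ≠ vm) :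
    (mixB a b (pull c pr.2) v, mixA a b (pull c pr.2) (if v = am then vm else v)) ∈
      Wfield a b c C WA WB WC :=
  Or.inr (Or.inl (Or.inl (Or.inr ⟨pr, hpr, v, vm, am, hvm, ham, hv, hne, rfl⟩)))

lemma mem_W_type3 (hpr : pr ∈ WC) {am : V} (ham : isMin (pull c pr.1) am)
    (hv : v ∈ pull c pr.1) (hne : v ≠ am) :
    (mixB a b (pull c pr.1) v, mixA a b (pull c pr.1) v) ∈ Wfield a b c C WA WB WC :=
  Or.inr (Or.inl (Or.inr ⟨pr, hpr, v, am, ham, hv, hne, rfl⟩))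

lemma mem_W_type4 (hγ : γ ∈ C) (hcrit : IsCritical WC (γ.image c)) {vm : V}
    (hvm : isMin γ vm) (hv : v ∈ γ) (hne : v ≠ vm) :
    (mixB a b γ v, mixA a b γ v) ∈ Wfield a b c C WA WB WC :=
  Or.inr (Or.inr ⟨γ, hγ, hcrit, v, vm, hvm, hv, hne, rfl⟩)

end Wmem

section Wclass
variable (ha : Function.Injective a) (hb : Function.Injective b)
  (hab : ∀ u v : V, a u ≠ b v) (hc : Function.Injective c)
  (hWAd : IsDVF (copy a A) WA) (hWBd : IsDVF (copy b B) WB)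
  (hWCd : IsDVF (copy c C) WC) (hCne : ∀ ε ∈ C, ε.Nonempty)
include ha hb hab hc hWAd hWBd hWCd hCne

/-- Classification of `W`-pairs whose second component is `mixA γ v`. -/
lemma pair_into_mixA (hv : v ∈ γ) {ρ : Finset U}
    (h : (ρ, mixA a b γ v) ∈ Wfield a b c C WA WB WC) :
    (∃ pr ∈ WC, pull c pr.2 = γ ∧ isMin (pull c pr.1) v ∧
        ρ = mixA a b (pull c pr.1) v) ∨
    (∃ pr ∈ WC, pull c pr.2 = γ ∧ ∃ u vm am, isMin γ vm ∧ isMin (pull c pr.1) am ∧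
        u ∈ γ ∧ u ≠ vm ∧ ρ = mixB a b γ u ∧ v = (if u = am then vm else u)) ∨
    (∃ pr ∈ WC, pull c pr.1 = γ ∧ (∃ am, isMin γ am ∧ v ≠ am) ∧ ρ = mixB a b γ v) ∨
    (γ ∈ C ∧ IsCritical WC (γ.image c) ∧ (∃ vm, isMin γ vm ∧ v ≠ vm) ∧
        ρ = mixB a b γ v) := by
  rcases h with ((h | h) | (((h | h) | h) | h))
  · -- WA
    exfalso
    obtain ⟨ε, hε, heq⟩ := (hWAd.1 _ h).2.1
    exact image_a_ne_mixA ha hb hab hv heq.symm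
  · -- WB
    exfalso
    obtain ⟨ε, hε, heq⟩ := (hWBd.1 _ h).2.1
    exact image_b_ne_mixA ha hb hab hv heq.symm
  · -- type 1
    obtain ⟨pr, hpr, vm, hvm, heq⟩ := h
    simp only [Prod.mk.injEq] at heq
    have hvm2 : vm ∈ pull c pr.2 := by
      have := (WC_pull_spec hc hWCd hCne hpr).1
      exact this hvm.1
    obtain ⟨hγ, hveq⟩ := mixA_inj ha hb hab hv hvm2 heq.2
    subst hveq
    exact Or.inl ⟨pr, hpr, hγ.symm, hvm, heq.1⟩
  · -- type 2
    obtain ⟨pr, hpr, u', vm, am, hvm, ham, hu', hune, heq⟩ := h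
    simp only [Prod.mk.injEq] at heq
    have hpiv : (if u' = am then vm else u') ∈ pull c pr.2 := by
      split
      · exact hvm.1
      · exact hu'
    obtain ⟨hγ, hveq⟩ := mixA_inj ha hb hab hv hpiv heq.2
    subst hγ
    exact Or.inr (Or.inl ⟨pr, hpr, rfl, u', vm, am, hvm, ham, hu', hune, heq.1, hveq⟩)
  · -- type 3
    obtain ⟨pr, hpr, u', am, ham, hu', hune, heq⟩ := h
    simp only [Prod.mk.injEq] at heq
    obtain ⟨hγ, hveq⟩ := mixA_inj ha hb hab hv hu' heq.2
    subst hγ; subst hveq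
    exact Or.inr (Or.inr (Or.inl ⟨pr, hpr, rfl, ⟨am, ham, hune⟩, heq.1⟩))
  · -- type 4
    obtain ⟨γ'', hγ'', hcrit, u', vm, hvm, hu', hune, heq⟩ := h
    simp only [Prod.mk.injEq] at heq
    obtain ⟨hγ, hveq⟩ := mixA_inj ha hb hab hv hu' heq.2
    subst hγ; subst hveq
    exact Or.inr (Or.inr (Or.inr ⟨hγ'', hcrit, ⟨vm, hvm, hune⟩, heq.1⟩))

/-- Classification of `W`-pairs whose first component is `mixB γ u`, `u` not minimal. -/
lemma pair_from_mixB (hu : u ∈ γ) (hmin : ∃ t ∈ γ, t < u) {τ : Finset U}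
    (h : (mixB a b γ u, τ) ∈ Wfield a b c C WA WB WC) :
    (∃ pr ∈ WC, pull c pr.2 = γ ∧ ∃ vm am, isMin γ vm ∧ isMin (pull c pr.1) am ∧
        τ = mixA a b γ (if u = am then vm else u)) ∨
    (∃ pr ∈ WC, pull c pr.1 = γ ∧ τ = mixA a b γ u) ∨
    (γ ∈ C ∧ IsCritical WC (γ.image c) ∧ τ = mixA a b γ u) := by
  obtain ⟨t0, ht0, ht0u⟩ := hmin
  rcases h with ((h | h) | (((h | h) | h) | h))
  · exfalso
    obtain ⟨ε, hε, heq⟩ := (hWAd.1 _ h).1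
    exact image_a_ne_mixB ha hb hab hu heq.symm
  · exfalso
    obtain ⟨ε, hε, heq⟩ := (hWBd.1 _ h).1
    exact image_b_ne_mixB ha hb hab hu ht0 ht0u heq.symm
  · exfalso
    obtain ⟨pr, hpr, vm, hvm, heq⟩ := h
    simp only [Prod.mk.injEq] at heq
    exact mixA_ne_mixB ha hb hab hvm.1 heq.1.symm
  · obtain ⟨pr, hpr, u', vm, am, hvm, ham, hu', hune, heq⟩ := h
    simp only [Prod.mk.injEq] at heq
    obtain ⟨hγ, hueq⟩ := mixB_inj ha hb hab hu hu' heq.1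
    subst hγ
    subst hueq
    exact Or.inl ⟨pr, hpr, rfl, vm, am, hvm, ham, heq.2⟩
  · obtain ⟨pr, hpr, u', am, ham, hu', hune, heq⟩ := h
    simp only [Prod.mk.injEq] at heq
    obtain ⟨hγ, hueq⟩ := mixB_inj ha hb hab hu hu' heq.1
    subst hγ; subst hueq
    exact Or.inr (Or.inl ⟨pr, hpr, rfl, heq.2⟩)
  · obtain ⟨γ'', hγ'', hcrit, u', vm, hvm, hu', hune, heq⟩ := h
    simp only [Prod.mk.injEq] at heq
    obtain ⟨hγ, hueq⟩ := mixB_inj ha hb hab hu hu' heq.1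
    subst hγ; subst hueq
    exact Or.inr (Or.inr ⟨hγ'', hcrit, heq.2⟩)

/-- `γ.image a` cannot be the first component of a `W`-pair whose second component has
ground simplex `γ`. -/
lemma pure_a_not_paired (hγne : γ.Nonempty) {τ : Finset U}
    (h : (γ.image a, τ) ∈ Wfield a b c C WA WB WC) (hGS : GS a b τ = γ) : False := by
  rcases h with ((h | h) | (((h | h) | h) | h))
  · obtain ⟨hσ, hτ, hsub, hcard⟩ := hWAd.1 _ h
    obtain ⟨ε, hε, heq⟩ := hτ
    replace heq : τ = ε.image a := heq
    replace hcard : τ.card = (γ.image a).card + 1 := hcard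
    have hGSε : GS a b (ε.image a) = ε := GS_image_a ha hb hab
    rw [heq, hGSε] at hGS
    subst hGS
    rw [heq] at hcard; simp only [Finset.card_image_of_injective _ ha] at hcard
    omega
  · obtain ⟨ε, hε, heq⟩ := (hWBd.1 _ h).1
    obtain ⟨x, hx⟩ := hγne
    have : a x ∈ ε.image b := by rw [← heq]; exact Finset.mem_image_of_mem a hx
    exact a_notMem_image_b ha hb hab this
  · obtain ⟨pr, hpr, vm, hvm, heq⟩ := h
    simp only [Prod.mk.injEq] at heq
    exact image_a_ne_mixA ha hb hab hvm.1 heq.1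
  · obtain ⟨pr, hpr, u', vm, am, hvm, ham, hu', hune, heq⟩ := h
    simp only [Prod.mk.injEq] at heq
    exact image_a_ne_mixB ha hb hab hu' heq.1
  · obtain ⟨pr, hpr, u', am, ham, hu', hune, heq⟩ := h
    simp only [Prod.mk.injEq] at heq
    exact image_a_ne_mixB ha hb hab hu' heq.1
  · obtain ⟨γ'', hγ'', hcrit, u', vm, hvm, hu', hune, heq⟩ := h
    simp only [Prod.mk.injEq] at heq
    exact image_a_ne_mixB ha hb hab hu' heq.1

/-- `γ.image b` cannot be the first component of a `W`-pair whose second component has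
ground simplex `γ`. -/
lemma pure_b_not_paired (hγne : γ.Nonempty) {τ : Finset U}
    (h : (γ.image b, τ) ∈ Wfield a b c C WA WB WC) (hGS : GS a b τ = γ) : False := by
  rcases h with ((h | h) | (((h | h) | h) | h))
  · obtain ⟨ε, hε, heq⟩ := (hWAd.1 _ h).1
    obtain ⟨x, hx⟩ := hγne
    have : b x ∈ ε.image a := by rw [← heq]; exact Finset.mem_image_of_mem b hx
    exact b_notMem_image_a ha hb hab this
  · obtain ⟨hσ, hτ, hsub, hcard⟩ := hWBd.1 _ h
    obtain ⟨ε, hε, heq⟩ := hτ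
    replace heq : τ = ε.image b := heq
    replace hcard : τ.card = (γ.image b).card + 1 := hcard
    have hGSε : GS a b (ε.image b) = ε := GS_image_b ha hb hab
    rw [heq, hGSε] at hGS
    subst hGS
    rw [heq] at hcard; simp only [Finset.card_image_of_injective _ hb] at hcard
    omega
  · obtain ⟨pr, hpr, vm, hvm, heq⟩ := h
    simp only [Prod.mk.injEq] at heq
    exact image_b_ne_mixA ha hb hab hvm.1 heq.1
  · obtain ⟨pr, hpr, u', vm, am, hvm, ham, hu', hune, heq⟩ := h
    simp only [Prod.mk.injEq] at heq
    refine image_b_ne_mixB ha hb hab hu' hvm.1 ?_ heq.1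
    exact lt_of_le_of_ne (hvm.2 _ hu') (Ne.symm hune)
  · obtain ⟨pr, hpr, u', am, ham, hu', hune, heq⟩ := h
    simp only [Prod.mk.injEq] at heq
    refine image_b_ne_mixB ha hb hab hu' ham.1 ?_ heq.1
    exact lt_of_le_of_ne (ham.2 _ hu') (Ne.symm hune)
  · obtain ⟨γ'', hγ'', hcrit, u', vm, hvm, hu', hune, heq⟩ := h
    simp only [Prod.mk.injEq] at heq
    refine image_b_ne_mixB ha hb hab hu' hvm.1 ?_ heq.1
    exact lt_of_le_of_ne (hvm.2 _ hu') (Ne.symm hune)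

end Wclass
end Aux4
section Aux5
set_option linter.unusedSectionVars false
set_option linter.unusedVariables false
variable {V : Type*} {U : Type*} [Fintype V] [LinearOrder V] [LinearOrder U]
variable {a b c : V → U} {γ γ' δ : Finset V} {u v w v' : V}
variable {A B C : Set (Finset V)} {WA WB WC : Set (Finset U × Finset U)}

lemma ExtTraj_ext {W : Set (Finset U × Finset U)} {P Q : ExtTraj W}
    (hk : P.k = Q.k) (ht : P.t = Q.t) (hs : P.s = Q.s) : P = Q := by
  cases P; cases Q
  simp only at hk ht hs
  subst hk; subst ht; subst hs
  rfl

section Cl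
variable (ha : Function.Injective a) (hb : Function.Injective b)
  (hab : ∀ u v : V, a u ≠ b v)
include ha hb hab

lemma prismInt_spec (hCne : ∀ ε ∈ C, ε.Nonempty) {σ : Finset U}
    (h : σ ∈ prismInt a b C) :
    ∃ γ, γ ∈ C ∧ GS a b σ = γ ∧
      ((∃ v ∈ γ, σ = mixA a b γ v) ∨
       (∃ v ∈ γ, (∃ t ∈ γ, t < v) ∧ σ = mixB a b γ v)) := by
  obtain ⟨hp, hnc⟩ := h
  simp only [prism, Set.mem_iUnion] at hp
  obtain ⟨γ, hγ, hσS⟩ := hp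
  refine ⟨γ, hγ, ?_⟩
  rcases hσS with hσA | hσB
  · obtain ⟨v, hv, rfl⟩ := hσA
    exact ⟨GS_mixA ha hb hab hv, Or.inl ⟨v, hv, rfl⟩⟩
  · rcases hσB with hσB | hσa
    · obtain ⟨v, hv, rfl⟩ := hσB
      refine ⟨GS_mixB ha hb hab hv, ?_⟩
      by_cases hex : ∃ t ∈ γ, t < v
      · exact Or.inr ⟨v, hv, hex, rfl⟩
      · exfalso
        push_neg at hex
        have : mixB a b γ v = γ.image b := mixB_min_eq_image_b ha hb hab hex
        exact hnc (Or.inr ⟨γ, hγ, this⟩)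
    · exfalso
      simp only [Set.mem_singleton_iff] at hσa
      exact hnc (Or.inl ⟨γ, hγ, hσa⟩)

lemma no_pair_into_mixB (hc : Function.Injective c) (hWAd : IsDVF (copy a A) WA)
    (hWBd : IsDVF (copy b B) WB) (hWCd : IsDVF (copy c C) WC)
    (hCne : ∀ ε ∈ C, ε.Nonempty) (hu : u ∈ γ) (hmin : ∃ t ∈ γ, t < u) {ρ : Finset U}
    (h : (ρ, mixB a b γ u) ∈ Wfield a b c C WA WB WC) : False := by
  obtain ⟨t0, ht0, ht0u⟩ := hmin
  rcases h with ((h | h) | (((h | h) | h) | h))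
  · obtain ⟨ε, hε, heq⟩ := (hWAd.1 _ h).2.1
    exact image_a_ne_mixB ha hb hab hu heq.symm
  · obtain ⟨ε, hε, heq⟩ := (hWBd.1 _ h).2.1
    have : a t0 ∈ ε.image b := by
      rw [← heq]
      exact (a_mem_mixB_iff ha hb hab).2 ⟨ht0, ht0u⟩
    exact a_notMem_image_b ha hb hab this
  · obtain ⟨pr, hpr, vm, hvm, heq⟩ := h
    simp only [Prod.mk.injEq] at heq
    have hvm2 : vm ∈ pull c pr.2 := (WC_pull_spec hc hWCd hCne hpr).1 hvm.1
    exact mixA_ne_mixB ha hb hab hvm2 heq.2.symm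
  · obtain ⟨pr, hpr, u', vm, am, hvm, ham, hu', hune, heq⟩ := h
    simp only [Prod.mk.injEq] at heq
    have hpiv : (if u' = am then vm else u') ∈ pull c pr.2 := by
      split
      · exact hvm.1
      · exact hu'
    exact mixA_ne_mixB ha hb hab hpiv heq.2.symm
  · obtain ⟨pr, hpr, u', am, ham, hu', hune, heq⟩ := h
    simp only [Prod.mk.injEq] at heq
    exact mixA_ne_mixB ha hb hab hu' heq.2.symm
  · obtain ⟨γ'', hγ'', hcrit, u', vm, hvm, hu', hune, heq⟩ := h
    simp only [Prod.mk.injEq] at heq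
    exact mixA_ne_mixB ha hb hab hu' heq.2.symm

end Cl
end Aux5
section Aux6
set_option linter.unusedSectionVars false
set_option linter.unusedVariables false
set_option maxHeartbeats 1000000
variable {V : Type*} {U : Type*} [Fintype V] [LinearOrder V] [LinearOrder U]
variable {a b : V → U} {γ δ : Finset V} {w : V}

/-- The generic construction/uniqueness of the ground-simplex-changing trajectory. -/
theorem generic_unique (ia : Function.Injective a) (ib : Function.Injective b)
    (iab : ∀ u v : V, a u ≠ b v) {W : Set (Finset U × Finset U)}
    (hγne : γ.Nonempty) {τ₁ σ₂ : Finset U} {p₀ pw : ℕ}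
    (hδγ : δ ⊆ γ) (hδcard : γ.card = δ.card + 1) (hwδ : w ∈ δ)
    (hτeq : τ₁ = mixA a b γ (pivFn γ hγne p₀)) (hσeq : σ₂ = mixA a b δ w)
    (hp₀ : p₀ < γ.card) (hpw : pw < γ.card) (hw : w = pivFn γ hγne pw)
    (HA : ∀ j, p₀ < j → j < γ.card →
      (mixB a b γ (pivFn γ hγne j), mixA a b γ (pivFn γ hγne j)) ∈ W)
    (HB : ∀ j, p₀ < j → j < γ.card → ∀ τ', (mixB a b γ (pivFn γ hγne j), τ') ∈ W →
      τ' = mixA a b γ (pivFn γ hγne j))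
    (Hσnm : ∀ j, j < γ.card → (σ₂, mixA a b γ (pivFn γ hγne j)) ∉ W)
    (Hpa : ∀ τ', (γ.image a, τ') ∈ W → GS a b τ' = γ → False)
    (Hpb : ∀ τ', (γ.image b, τ') ∈ W → GS a b τ' = γ → False)
    (Hdown : p₀ = 0 ∨ (p₀ = 1 ∧
      (mixB a b γ (pivFn γ hγne 1), mixA a b γ (pivFn γ hγne 0)) ∈ W ∧
      ∀ τ', (mixB a b γ (pivFn γ hγne 1), τ') ∈ W → τ' = mixA a b γ (pivFn γ hγne 0))) :
    ∃! P : ExtTraj W,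
      P.t 0 = τ₁ ∧ P.s (P.k + 1) = σ₂ ∧
        (∀ i ≤ P.k, GS a b (P.t i) = GS a b τ₁) ∧
        ∀ i, 1 ≤ i → i ≤ P.k → GS a b (P.s i) = GS a b τ₁ := by
  classical
  have hpm : ∀ j, pivFn γ hγne j ∈ γ := pivFn_mem hγne
  have hGSτγ : GS a b τ₁ = γ := by rw [hτeq]; exact GS_mixA ia ib iab (hpm p₀)
  have hGST : ∀ j, GS a b (mixA a b γ (pivFn γ hγne j)) = γ :=
    fun j => GS_mixA ia ib iab (hpm j)
  have hGSS : ∀ j, GS a b (mixB a b γ (pivFn γ hγne j)) = γ :=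
    fun j => GS_mixB ia ib iab (hpm j)
  have hcT : ∀ j, (mixA a b γ (pivFn γ hγne j)).card = γ.card + 1 :=
    fun j => card_mixA ia ib iab (hpm j)
  have hcS : ∀ j, (mixB a b γ (pivFn γ hγne j)).card = γ.card :=
    fun j => card_mixB ia ib iab (hpm j)
  have hcσ : σ₂.card = γ.card := by
    rw [hσeq, card_mixA ia ib iab hwδ]; omega
  have hTinj : ∀ j j', j < γ.card → j' < γ.card →
      mixA a b γ (pivFn γ hγne j) = mixA a b γ (pivFn γ hγne j') → j = j' := by
    intro j j' hj hj' h
    exact pivFn_inj hγne hj hj' (mixA_inj ia ib iab (hpm j) (hpm j') h).2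
  have hsubS : ∀ j, j + 1 < γ.card →
      mixB a b γ (pivFn γ hγne (j+1)) ⊆ mixA a b γ (pivFn γ hγne j) := by
    intro j hj
    exact mixB_subset_mixA_self ia ib iab (hpm (j+1)) (hpm j)
      (le_of_lt (pivFn_lt hγne (Nat.lt_succ_self j) hj))
      (fun t ht hlt => pivFn_between hγne hj ht hlt)
  have hsubSelf : ∀ j, mixB a b γ (pivFn γ hγne j) ⊆ mixA a b γ (pivFn γ hγne j) := by
    intro j
    exact mixB_subset_mixA_self ia ib iab (hpm j) (hpm j) le_rfl
      (fun t ht hlt => le_of_lt hlt)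
  have hsubσ : σ₂ ⊆ mixA a b γ (pivFn γ hγne pw) := by
    rw [hσeq, ← hw]
    exact mixA_subset_mixA ia ib iab hδγ hwδ
  have hS0b : mixB a b γ (pivFn γ hγne 0) = γ.image b := by
    apply mixB_min_eq_image_b ia ib iab
    intro u hu
    rw [pivFn_zero]
    exact γ.min'_le u hu
  -- classification of any good trajectory
  have Qspec : ∀ Q : ExtTraj W, Q.t 0 = τ₁ → Q.s (Q.k + 1) = σ₂ →
      (∀ i ≤ Q.k, GS a b (Q.t i) = γ) → (∀ i, 1 ≤ i → i ≤ Q.k → GS a b (Q.s i) = γ) →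
      ((Q.k = 0 ∧ pw = p₀) ∨
       (1 ≤ Q.k ∧ pw = p₀ + Q.k ∧ ∀ i, 1 ≤ i → i ≤ Q.k → p₀ + i < γ.card ∧
          Q.s i = mixB a b γ (pivFn γ hγne (p₀ + i)) ∧
          Q.t i = mixA a b γ (pivFn γ hγne (p₀ + i))) ∨
       (Q.k = 1 ∧ p₀ = 1 ∧ pw = 0 ∧ Q.s 1 = mixB a b γ (pivFn γ hγne 1) ∧
          Q.t 1 = mixA a b γ (pivFn γ hγne 0))) := by
    intro Q hQ0 hQend hQGt hQGs
    have hendsub : σ₂ ⊆ Q.t Q.k := by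
      have := Q.sub (Q.k + 1) (by omega) le_rfl
      rwa [Nat.add_sub_cancel, hQend] at this
    have hendpiv : ∀ j, j < γ.card → Q.t Q.k = mixA a b γ (pivFn γ hγne j) → pw = j := by
      intro j hj hQt
      rw [hQt] at hendsub
      have hwp : w = pivFn γ hγne j := by
        apply pivot_eq_of_mixA_subset ia ib iab hδγ hwδ (hpm j)
        rw [← hσeq]; exact hendsub
      exact pivFn_inj hγne hpw hj (by rw [← hw, hwp])
    by_cases hk0 : Q.k = 0
    · left
      refine ⟨hk0, hendpiv p₀ hp₀ ?_⟩
      rw [hk0, hQ0, hτeq]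
    · have hk1 : 1 ≤ Q.k := by omega
      -- generic facet analysis at step i+1 from a known t i
      have stepcase : ∀ i j, 1 ≤ i → i ≤ Q.k → j < γ.card →
          Q.t (i - 1) = mixA a b γ (pivFn γ hγne j) →
          Q.s i = mixB a b γ (pivFn γ hγne j) ∨
          (j + 1 < γ.card ∧ Q.s i = mixB a b γ (pivFn γ hγne (j + 1))) := by
        intro i j hi1 hik hj hQt
        have hρsub : Q.s i ⊆ mixA a b γ (pivFn γ hγne j) := by
          have := Q.sub i hi1 (by omega)
          rwa [hQt] at this
        have hρcard : (Q.s i).card + 1 = (mixA a b γ (pivFn γ hγne j)).card := by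
          rw [Q.dim_s i hi1 (by omega), hQ0, hτeq, hcT, hcT]
        have hρGS : GS a b (Q.s i) = γ := hQGs i hi1 hik
        rcases facet_of_mixA ia ib iab (hpm j) hρsub hρcard hρGS with h1 | h2 | h3
        · exact Or.inl h1
        · obtain ⟨u, huγ, hlt, hminu, hρeq⟩ := h2
          obtain ⟨hj1, hueq⟩ := pivFn_succ_of_adjacent hγne hj huγ hlt hminu
          exact Or.inr ⟨hj1, by rw [hρeq, hueq]⟩
        · exfalso
          have hmem := Q.mem i hi1 hik
          rw [h3.2] at hmem
          exact Hpa _ hmem (hQGt i hik)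
      -- the "went down" situation is terminal
      have stuck : ∀ i, 1 ≤ i → Q.t i = mixA a b γ (pivFn γ hγne 0) → p₀ = 1 →
          (mixB a b γ (pivFn γ hγne 1), mixA a b γ (pivFn γ hγne 0)) ∈ W →
          Q.k ≤ i := by
        intro i hi1 hQt hp1 hdmem
        by_contra hlt
        push_neg at hlt
        have hstep := stepcase (i+1) 0 (by omega) (by omega) (by omega)
          (by rwa [Nat.add_sub_cancel])
        rcases hstep with h1 | ⟨h1n, h2⟩
        · have hmem := Q.mem (i+1) (by omega) (by omega)
          rw [h1, hS0b] at hmem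
          exact Hpb _ hmem (hQGt (i+1) (by omega))
        · have := Q.nmem (i+1) (by omega) (by omega)
          rw [Nat.add_sub_cancel, h2, hQt] at this
          exact this hdmem
      -- first step
      have hfirst := stepcase 1 p₀ le_rfl hk1 hp₀ (by rw [Nat.sub_self, hQ0, hτeq])
      rcases hfirst with h1 | ⟨hp1n, h2⟩
      · -- down (or impossible)
        rcases Hdown with hp0 | ⟨hp1, hdmem, hduniq⟩
        · exfalso
          have hmem := Q.mem 1 le_rfl hk1
          rw [h1, hp0, hS0b] at hmem
          exact Hpb _ hmem (hQGt 1 hk1)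
        · right; right
          have hQt1 : Q.t 1 = mixA a b γ (pivFn γ hγne 0) := by
            have hmem := Q.mem 1 le_rfl hk1
            rw [h1, hp1] at hmem
            exact hduniq _ hmem
          have hQk : Q.k = 1 :=
            le_antisymm (stuck 1 le_rfl hQt1 hp1 hdmem) hk1
          refine ⟨hQk, hp1, ?_, by rw [h1, hp1], hQt1⟩
          exact hendpiv 0 (by omega) (by rw [hQk, hQt1])
      · -- up : climb
        right; left
        have hQt1 : Q.t 1 = mixA a b γ (pivFn γ hγne (p₀ + 1)) := by
          have hmem := Q.mem 1 le_rfl hk1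
          rw [h2] at hmem
          exact HB (p₀ + 1) (by omega) hp1n _ hmem
        have climb : ∀ i, 1 ≤ i → i ≤ Q.k → p₀ + i < γ.card ∧
            Q.s i = mixB a b γ (pivFn γ hγne (p₀ + i)) ∧
            Q.t i = mixA a b γ (pivFn γ hγne (p₀ + i)) := by
          intro i
          induction i with
          | zero => omega
          | succ i ih =>
            intro _ hik
            by_cases hi0 : i = 0
            · subst hi0
              exact ⟨hp1n, h2, hQt1⟩
            · obtain ⟨ihn, ihs, iht⟩ := ih (by omega) (by omega)
              have hstep := stepcase (i+1) (p₀+i) (by omega) hik ihn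
                (by rwa [Nat.add_sub_cancel])
              rcases hstep with hs1 | ⟨hs1n, hs2⟩
              · exfalso
                have := Q.nmem (i+1) (by omega) (by omega)
                rw [Nat.add_sub_cancel, hs1, iht] at this
                exact this (HA (p₀+i) (by omega) ihn)
              · have hsi : Q.s (i+1) = mixB a b γ (pivFn γ hγne (p₀ + (i+1))) := by
                  rw [hs2]; ring_nf
                refine ⟨by omega, hsi, ?_⟩
                have hmem := Q.mem (i+1) (by omega) hik
                rw [hsi] at hmem
                exact HB (p₀ + (i+1)) (by omega) (by omega) _ hmem
        obtain ⟨hkn, hks, hkt⟩ := climb Q.k hk1 le_rfl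
        exact ⟨hk1, hendpiv (p₀ + Q.k) hkn hkt, climb⟩
  -- now split on up / down
  by_cases hupdown : p₀ ≤ pw
  · -- ascending trajectory
    have hk : p₀ + (pw - p₀) = pw := by omega
    refine ⟨⟨pw - p₀,
      fun i => if i ≤ pw - p₀ then mixA a b γ (pivFn γ hγne (p₀ + i)) else ∅,
      fun i => if 1 ≤ i ∧ i ≤ pw - p₀ then mixB a b γ (pivFn γ hγne (p₀ + i))
        else if i = pw - p₀ + 1 then σ₂ else ∅,
      ?_, ?_, ?_, ?_, ?_, ?_, ?_⟩, ⟨?_, ?_, ?_, ?_⟩, ?_⟩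
    · -- dim_t
      intro i hik
      simp [if_pos hik, hcT]
    · -- dim_s
      intro i hi1 hik1
      by_cases hik : i ≤ pw - p₀
      · simp [if_pos (And.intro hi1 hik), hcS, hcT]
      · simp [if_neg (show ¬ (1 ≤ i ∧ i ≤ pw - p₀) by omega),
          if_pos (show i = pw - p₀ + 1 by omega), hcσ, hcT]
    · -- mem
      intro i hi1 hik
      simp only [if_pos (And.intro hi1 hik), if_pos hik]
      exact HA (p₀ + i) (by omega) (by omega)
    · -- sub
      intro i hi1 hik1
      by_cases hik : i ≤ pw - p₀
      · simp only [if_pos (And.intro hi1 hik), if_pos (show i - 1 ≤ pw - p₀ by omega)]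
        have hrw : p₀ + i = (p₀ + (i - 1)) + 1 := by omega
        rw [hrw]
        exact hsubS (p₀ + (i-1)) (by omega)
      · simp only [if_neg (show ¬ (1 ≤ i ∧ i ≤ pw - p₀) by omega),
          if_pos (show i = pw - p₀ + 1 by omega),
          if_pos (show i - 1 ≤ pw - p₀ by omega)]
        have hrw : p₀ + (i - 1) = pw := by omega
        rw [hrw]
        exact hsubσ
    · -- nmem
      intro i hi1 hik1
      by_cases hik : i ≤ pw - p₀
      · simp only [if_pos (And.intro hi1 hik), if_pos (show i - 1 ≤ pw - p₀ by omega)]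
        intro hcon
        have hτ' := HB (p₀ + i) (by omega) (by omega) _ hcon
        have hj := hTinj (p₀ + (i-1)) (p₀ + i) (by omega) (by omega) hτ'
        omega
      · simp only [if_neg (show ¬ (1 ≤ i ∧ i ≤ pw - p₀) by omega),
          if_pos (show i = pw - p₀ + 1 by omega),
          if_pos (show i - 1 ≤ pw - p₀ by omega)]
        have hrw : p₀ + (i - 1) = pw := by omega
        rw [hrw]
        exact Hσnm pw hpw
    · -- pad_t
      intro i hik
      simp [if_neg (show ¬ i ≤ pw - p₀ by omega)]
    · -- pad_s
      intro i hi
      have h1 : ¬ (1 ≤ i ∧ i ≤ pw - p₀) := by omega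
      have h2 : ¬ (i = pw - p₀ + 1) := by omega
      simp [if_neg h1, if_neg h2]
    · -- t 0 = τ₁
      simp [if_pos (Nat.zero_le (pw - p₀)), hτeq]
    · -- s (k+1) = σ₂
      simp [if_neg (show ¬ (1 ≤ pw - p₀ + 1 ∧ pw - p₀ + 1 ≤ pw - p₀) by omega)]
    · -- GS t
      intro i hik
      simp [if_pos hik, hGST, hGSτγ]
    · -- GS s
      intro i hi1 hik
      simp [if_pos (And.intro hi1 hik), hGSS, hGSτγ]
    · -- uniqueness
      intro Q hQ
      obtain ⟨hQ0, hQend, hQGt, hQGs⟩ := hQ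
      rw [hGSτγ] at hQGt hQGs
      rcases Qspec Q hQ0 hQend hQGt hQGs with ⟨hQk, hpwp⟩ | ⟨hQk1, hpwk, hcl⟩ |
        ⟨hQk, hp1, hpw0, _, _⟩
      · -- Q.k = 0, pw = p₀
        have hkv : pw - p₀ = 0 := by omega
        have hQend' : Q.s 1 = σ₂ := by rw [← hQend, hQk]
        apply ExtTraj_ext
        · simp [hQk, hkv]
        · funext i
          rcases Nat.eq_zero_or_pos i with rfl | hi
          · simp [hQ0, hτeq]
          · rw [Q.pad_t i (by omega)]
            simp [if_neg (show ¬ i ≤ pw - p₀ by omega)]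
        · funext i
          rcases Nat.eq_zero_or_pos i with rfl | hi
          · rw [Q.pad_s 0 (Or.inl rfl)]
            simp [hkv]
          · by_cases hi1 : i = 1
            · subst hi1
              simp [hkv, hQend']
            · rw [Q.pad_s i (Or.inr (by omega))]
              simp [if_neg (show ¬ (1 ≤ i ∧ i ≤ pw - p₀) by omega),
                if_neg (show ¬ (i = pw - p₀ + 1) by omega)]
      · -- climb
        have hQkval : Q.k = pw - p₀ := by omega
        apply ExtTraj_ext
        · simp [hQkval]
        · funext i
          rcases Nat.eq_zero_or_pos i with rfl | hi
          · simp [hQ0, hτeq]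
          · by_cases hik : i ≤ Q.k
            · rw [(hcl i hi hik).2.2]
              simp [if_pos (show i ≤ pw - p₀ by omega)]
            · rw [Q.pad_t i (by omega)]
              simp [if_neg (show ¬ i ≤ pw - p₀ by omega)]
        · funext i
          rcases Nat.eq_zero_or_pos i with rfl | hi
          · rw [Q.pad_s 0 (Or.inl rfl)]
            simp
          · by_cases hik : i ≤ Q.k
            · rw [(hcl i hi hik).2.1]
              simp [if_pos (show 1 ≤ i ∧ i ≤ pw - p₀ from ⟨hi, by omega⟩)]
            · by_cases hik1 : i = Q.k + 1
              · subst hik1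
                rw [hQend]
                simp [show ¬ (Q.k + 1 ≤ pw - p₀) from by omega, hQkval]
              · rw [Q.pad_s i (Or.inr (by omega))]
                simp [if_neg (show ¬ (1 ≤ i ∧ i ≤ pw - p₀) by omega),
                  if_neg (show ¬ (i = pw - p₀ + 1) by omega)]
      · -- down: impossible since p₀ ≤ pw
        omega
  · -- descending trajectory : pw < p₀, so p₀ = 1, pw = 0
    have hp1 : p₀ = 1 := by
      rcases Hdown with h | h
      · omega
      · exact h.1
    have hpw0 : pw = 0 := by omega
    obtain ⟨_, hdmem, hduniq⟩ : p₀ = 1 ∧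
        (mixB a b γ (pivFn γ hγne 1), mixA a b γ (pivFn γ hγne 0)) ∈ W ∧
        ∀ τ', (mixB a b γ (pivFn γ hγne 1), τ') ∈ W → τ' = mixA a b γ (pivFn γ hγne 0) := by
      rcases Hdown with h | h
      · omega
      · exact h
    refine ⟨⟨1,
      fun i => if i = 0 then mixA a b γ (pivFn γ hγne 1)
        else if i = 1 then mixA a b γ (pivFn γ hγne 0) else ∅,
      fun i => if i = 1 then mixB a b γ (pivFn γ hγne 1) else if i = 2 then σ₂ else ∅,
      ?_, ?_, ?_, ?_, ?_, ?_, ?_⟩, ⟨?_, ?_, ?_, ?_⟩, ?_⟩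
    · -- dim_t
      intro i hik
      interval_cases i <;> simp [hcT]
    · -- dim_s
      intro i hi1 hik
      interval_cases i <;> simp [hcS, hcσ, hcT]
    · -- mem
      intro i hi1 hik
      interval_cases i
      simpa using hdmem
    · -- sub
      intro i hi1 hik
      interval_cases i
      · simpa using hsubSelf 1
      · have hsq := hsubσ
        rw [hpw0] at hsq
        simpa using hsq
    · -- nmem
      intro i hi1 hik
      interval_cases i
      · simp only [show (1:ℕ) - 1 = 0 from rfl]
        try simp only [if_pos rfl]
        try simp
        intro hcon
        have hτ' := hduniq _ hcon
        have := hTinj 1 0 (by omega) (by omega) hτ'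
        omega
      · simp only [show (2:ℕ) - 1 = 1 from rfl]
        try simp
        exact Hσnm 0 (by omega)
    · -- pad_t
      intro i hik
      simp [if_neg (show ¬ i = 0 by omega), if_neg (show ¬ i = 1 by omega)]
    · -- pad_s
      intro i hi
      simp [if_neg (show ¬ i = 1 by omega), if_neg (show ¬ i = 2 by omega)]
    · -- t 0 = τ₁
      simp [hτeq, hp1]
    · -- s 2 = σ₂
      simp
    · -- GS t
      intro i hik
      interval_cases i <;> simp [hGST, hGSτγ]
    · -- GS s
      intro i hi1 hik
      interval_cases i
      simp [hGSS, hGSτγ]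
    · -- uniqueness
      intro Q hQ
      obtain ⟨hQ0, hQend, hQGt, hQGs⟩ := hQ
      rw [hGSτγ] at hQGt hQGs
      rcases Qspec Q hQ0 hQend hQGt hQGs with ⟨hQk, hpwp⟩ | ⟨hQk1, hpwk, hcl⟩ |
        ⟨hQk, _, _, hQs1, hQt1⟩
      · omega
      · omega
      · have hQend' : Q.s 2 = σ₂ := by rw [← hQend, hQk]
        apply ExtTraj_ext
        · simp [hQk]
        · funext i
          rcases Nat.eq_zero_or_pos i with rfl | hi
          · simp [hQ0, hτeq, hp1]
          · by_cases hi1 : i = 1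
            · subst hi1
              rw [hQt1]
              simp
            · rw [Q.pad_t i (by omega)]
              simp [if_neg (show ¬ i = 0 by omega), if_neg (show ¬ i = 1 by omega)]
        · funext i
          rcases Nat.eq_zero_or_pos i with rfl | hi
          · rw [Q.pad_s 0 (Or.inl rfl)]
            simp
          · by_cases hi1 : i = 1
            · subst hi1
              rw [hQs1]
              simp
            · by_cases hi2 : i = 2
              · subst hi2
                rw [hQend']
                simp
              · rw [Q.pad_s i (Or.inr (by omega))]
                simp [if_neg (show ¬ i = 1 by omega), if_neg (show ¬ i = 2 by omega)]
end Aux6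
/-- Let `τ₁` be an interior prism simplex which is `W`-critical or
is paired in `W` with a simplex `σ₁` of different ground simplex, and let `σ₂ ≠ σ₁` be
an interior prism facet-dimension simplex which is `W`-critical or is paired in `W` with
a simplex of different ground simplex.  If `GS(σ₂)` is a facet of `GS(τ₁)`, then there
is exactly one extended `W`-trajectory from `τ₁` to `σ₂` in which every simplex except
`σ₂` has ground simplex `GS(τ₁)`. -/
theorem unique_ground_simplex_changing_trajectory
    {V : Type*} {U : Type*} [Fintype V] [LinearOrder V] [LinearOrder U]
    (X A B : Set (Finset V)) (a b c : V → U)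
    (WA WB WC : Set (Finset U × Finset U))
    (hX : IsComplex X) (hA : IsComplex A) (hB : IsComplex B)
    (hUnion : A ∪ B = X)
    (ha : StrictMono a) (hb : StrictMono b) (hc : StrictMono c)
    (hab : ∀ u v : V, a u ≠ b v) (hac : ∀ u v : V, a u ≠ c v)
    (hbc : ∀ u v : V, b u ≠ c v)
    (hWA : IsGVF (copy a A) WA) (hWB : IsGVF (copy b B) WB)
    (hWC : IsGVF (copy c (A ∩ B)) WC)
    (τ₁ σ₂ : Finset U)
    (hτ : τ₁ ∈ prismInt a b (A ∩ B)) (hσ : σ₂ ∈ prismInt a b (A ∩ B))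
    (hcard : τ₁.card = σ₂.card + 1)
    (H1 : IsCritical (Wfield a b c (A ∩ B) WA WB WC) τ₁ ∨
      ∃ σ₁, (σ₁, τ₁) ∈ Wfield a b c (A ∩ B) WA WB WC ∧ GS a b σ₁ ≠ GS a b τ₁ ∧ σ₂ ≠ σ₁)
    (H2 : IsCritical (Wfield a b c (A ∩ B) WA WB WC) σ₂ ∨
      ∃ τ₂, (σ₂, τ₂) ∈ Wfield a b c (A ∩ B) WA WB WC ∧ GS a b σ₂ ≠ GS a b τ₂)
    (hfacet : GS a b σ₂ ⊆ GS a b τ₁ ∧ (GS a b τ₁).card = (GS a b σ₂).card + 1) :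
    ∃! P : ExtTraj (Wfield a b c (A ∩ B) WA WB WC),
      P.t 0 = τ₁ ∧ P.s (P.k + 1) = σ₂ ∧
        (∀ i ≤ P.k, GS a b (P.t i) = GS a b τ₁) ∧
        ∀ i, 1 ≤ i → i ≤ P.k → GS a b (P.s i) = GS a b τ₁ := by
  classical
  have hai : Function.Injective a := ha.injective
  have hbi : Function.Injective b := hb.injective
  have hci : Function.Injective c := hc.injective
  have hWAd := hWA.1
  have hWBd := hWB.1
  have hWCd := hWC.1
  have hCne : ∀ ε ∈ A ∩ B, ε.Nonempty := fun ε hε => (hA.2 ε hε.1).1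
  obtain ⟨γ, hγC, hGSτ, hτform⟩ := prismInt_spec hai hbi hab hCne hτ
  obtain ⟨δ, hδC, hGSσ, hσform⟩ := prismInt_spec hai hbi hab hCne hσ
  have hγne : γ.Nonempty := hCne γ hγC
  have hδne : δ.Nonempty := hCne δ hδC
  rw [hGSτ, hGSσ] at hfacet
  have hδγ : δ ⊆ γ := hfacet.1
  have hδcard : γ.card = δ.card + 1 := hfacet.2
  -- the role of γ.image c in WC
  have role : IsCritical WC (γ.image c) ∨
      ∃ pr ∈ WC, pull c pr.1 = γ ∨ pull c pr.2 = γ := by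
    by_cases h : IsCritical WC (γ.image c)
    · exact Or.inl h
    · right
      have hex : ∃ p, p ∈ WC ∧ (p.1 = γ.image c ∨ p.2 = γ.image c) := by
        by_contra hno
        push_neg at hno
        exact h (fun p hp => hno p hp)
      obtain ⟨p, hp, h1 | h1⟩ := hex
      · exact ⟨p, hp, Or.inl (by rw [h1, pull_image_self hci])⟩
      · exact ⟨p, hp, Or.inr (by rw [h1, pull_image_self hci])⟩
  -- τ₁ has to be of mixA type
  have hτA : ∃ v ∈ γ, τ₁ = mixA a b γ v := by
    rcases hτform with h | h
    · exact h
    · exfalso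
      obtain ⟨v, hv, hminv, hτeq⟩ := h
      rcases H1 with hcrit | ⟨σ₁, hσ₁W, hGS1, _⟩
      · have hvne : v ≠ γ.min' hγne := by
          obtain ⟨t, ht, hlt⟩ := hminv
          intro hveq
          exact absurd (γ.min'_le t ht) (not_le.2 (hveq ▸ hlt))
        rcases role with hcase | ⟨pr, hpr, hc1 | hc2⟩
        · exact (hcrit _ (mem_W_type4 (WA := WA) (WB := WB) hγC hcase
            (isMin_min' hγne) hv hvne)).1 hτeq.symm
        · have hmem := mem_W_type3 (a := a) (b := b) (C := A ∩ B) (WA := WA) (WB := WB)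
            hpr (am := γ.min' hγne) (by rw [hc1]; exact isMin_min' hγne)
            (by rw [hc1]; exact hv) hvne
          rw [hc1] at hmem
          exact (hcrit _ hmem).1 hτeq.symm
        · have hδ₁ne : (pull c pr.1).Nonempty := (WC_pull_spec hci hWCd hCne hpr).2.2.1
          have hmem := mem_W_type2 (a := a) (b := b) (C := A ∩ B) (WA := WA) (WB := WB)
            hpr (vm := γ.min' hγne) (am := (pull c pr.1).min' hδ₁ne)
            (by rw [hc2]; exact isMin_min' hγne) (isMin_min' hδ₁ne)
            (by rw [hc2]; exact hv) hvne
          rw [hc2] at hmem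
          exact (hcrit _ hmem).1 hτeq.symm
      · rw [hτeq] at hσ₁W
        exact no_pair_into_mixB hai hbi hab hci hWAd hWBd hWCd hCne hv hminv hσ₁W
  obtain ⟨v₀, hv₀γ, hτeq⟩ := hτA
  -- σ₂ has to be of mixA type
  have hσA : ∃ w ∈ δ, σ₂ = mixA a b δ w := by
    rcases hσform with h | h
    · exact h
    · exfalso
      obtain ⟨w', hw', hminw, hσeq⟩ := h
      have hc1 : τ₁.card = γ.card + 1 := by
        rw [hτeq]; exact card_mixA hai hbi hab hv₀γ
      have hc2 : σ₂.card = δ.card := by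
        rw [hσeq]; exact card_mixB hai hbi hab hw'
      omega
  obtain ⟨w, hwδ, hσeq⟩ := hσA
  have hwγ : w ∈ γ := hδγ hwδ
  obtain ⟨pw, hpw, hw⟩ := pivFn_surj hγne hwγ
  have hpm : ∀ j, pivFn γ hγne j ∈ γ := pivFn_mem hγne
  have Hpa : ∀ τ', (γ.image a, τ') ∈ Wfield a b c (A ∩ B) WA WB WC →
      GS a b τ' = γ → False :=
    fun τ' h hg => pure_a_not_paired hai hbi hab hci hWAd hWBd hWCd hCne hγne h hg
  have Hpb : ∀ τ', (γ.image b, τ') ∈ Wfield a b c (A ∩ B) WA WB WC →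
      GS a b τ' = γ → False :=
    fun τ' h hg => pure_b_not_paired hai hbi hab hci hWAd hWBd hWCd hCne hγne h hg
  rcases role with hcase | ⟨pr, hpr, hc1 | hc2⟩
  · -- Case I : γ.image c is critical
    have hv₀ : v₀ = γ.min' hγne := by
      rcases H1 with hcrit | ⟨σ₁, hσ₁W, hGS1, hne1⟩
      · by_contra hne
        exact (hcrit _ (mem_W_type4 (WA := WA) (WB := WB) hγC hcase
          (isMin_min' hγne) hv₀γ hne)).2 hτeq.symm
      · exfalso
        rw [hτeq] at hσ₁W
        rcases pair_into_mixA hai hbi hab hci hWAd hWBd hWCd hCne hv₀γ hσ₁W with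
          ⟨pr', hpr', hp2', _, _⟩ | ⟨pr', hpr', hp2', _⟩ | ⟨pr', hpr', hp1', _, _⟩ |
          ⟨_, _, _, hρ⟩
        · exact critEx2 hci hWCd hCne hcase hpr' hp2'
        · exact critEx2 hci hWCd hCne hcase hpr' hp2'
        · exact critEx1 hci hWCd hCne hcase hpr' hp1'
        · apply hGS1
          rw [hρ, GS_mixB hai hbi hab hv₀γ, hGSτ]
    have hτpiv : τ₁ = mixA a b γ (pivFn γ hγne 0) := by
      rw [hτeq, hv₀, pivFn_zero]
    have hne0 : ∀ j, 0 < j → j < γ.card → pivFn γ hγne j ≠ γ.min' hγne := by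
      intro j hj hjn hcon
      rw [← pivFn_zero hγne] at hcon
      have := pivFn_inj hγne hjn (by omega) hcon
      omega
    refine generic_unique hai hbi hab hγne hδγ hδcard hwδ hτpiv hσeq
      (by omega) hpw hw ?_ ?_ ?_ Hpa Hpb (Or.inl rfl)
    · intro j hj hjn
      exact mem_W_type4 hγC hcase (isMin_min' hγne) (hpm j) (hne0 j hj hjn)
    · intro j hj hjn τ' hmem
      have hminw : ∃ t ∈ γ, t < pivFn γ hγne j :=
        ⟨pivFn γ hγne 0, hpm 0, pivFn_lt hγne (by omega) hjn⟩
      rcases pair_from_mixB hai hbi hab hci hWAd hWBd hWCd hCne (hpm j) hminw hmem with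
        ⟨pr', hpr', hp2', _⟩ | ⟨pr', hpr', hp1', _⟩ | ⟨_, _, hτ'eq⟩
      · exact absurd hp2' (fun h => critEx2 hci hWCd hCne hcase hpr' h)
      · exact absurd hp1' (fun h => critEx1 hci hWCd hCne hcase hpr' h)
      · exact hτ'eq
    · intro j hjn hmem
      rcases pair_into_mixA hai hbi hab hci hWAd hWBd hWCd hCne (hpm j) hmem with
        ⟨pr', hpr', hp2', _, _⟩ | ⟨pr', hpr', hp2', _⟩ | ⟨pr', hpr', hp1', _, _⟩ |
        ⟨_, _, _, hρ⟩
      · exact critEx2 hci hWCd hCne hcase hpr' hp2'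
      · exact critEx2 hci hWCd hCne hcase hpr' hp2'
      · exact critEx1 hci hWCd hCne hcase hpr' hp1'
      · rw [hσeq] at hρ
        exact mixA_ne_mixB hai hbi hab hwδ hρ
  · -- Case II : γ.image c is the lower half of a pair : impossible
    exfalso
    rcases H1 with hcrit | ⟨σ₁, hσ₁W, hGS1, hne1⟩
    · by_cases hv0 : v₀ = γ.min' hγne
      · have hmem := mem_W_type1 (a := a) (b := b) (C := A ∩ B) (WA := WA) (WB := WB)
          hpr (vm := v₀) (by rw [hc1, hv0]; exact isMin_min' hγne)
        rw [hc1] at hmem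
        exact (hcrit _ hmem).1 hτeq.symm
      · have hmem := mem_W_type3 (a := a) (b := b) (C := A ∩ B) (WA := WA) (WB := WB)
          hpr (am := γ.min' hγne) (by rw [hc1]; exact isMin_min' hγne)
          (by rw [hc1]; exact hv₀γ) hv0
        rw [hc1] at hmem
        exact (hcrit _ hmem).2 hτeq.symm
    · rw [hτeq] at hσ₁W
      rcases pair_into_mixA hai hbi hab hci hWAd hWBd hWCd hCne hv₀γ hσ₁W with
        ⟨pr', hpr', hp2', _, _⟩ | ⟨pr', hpr', hp2', _⟩ | ⟨pr', hpr', hp1', _, hρ⟩ |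
        ⟨_, hcrit', _, hρ⟩
      · exact roleEx12 hci hWCd hCne hpr hpr' (hc1.trans hp2'.symm)
      · exact roleEx12 hci hWCd hCne hpr hpr' (hc1.trans hp2'.symm)
      · apply hGS1
        rw [hρ, GS_mixB hai hbi hab hv₀γ, hGSτ]
      · exact critEx1 hci hWCd hCne hcrit' hpr hc1
  · -- Case III : γ.image c is the upper half of a pair pr
    have hspec := WC_pull_spec hci hWCd hCne hpr
    have hδ₁ne : (pull c pr.1).Nonempty := hspec.2.2.1
    have hδ₁γ : pull c pr.1 ⊆ γ := by rw [← hc2]; exact hspec.1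
    have hδ₁card : γ.card = (pull c pr.1).card + 1 := by rw [← hc2]; exact hspec.2.1
    set am := (pull c pr.1).min' hδ₁ne with hamdef
    set vm := γ.min' hγne with hvmdef
    have hamγ : am ∈ γ := hδ₁γ ((pull c pr.1).min'_mem hδ₁ne)
    have hvmisMin : isMin (pull c pr.2) vm := by rw [hc2]; exact isMin_min' hγne
    have hbranch : v₀ = am ∧ σ₂ ≠ mixA a b (pull c pr.1) am := by
      rcases H1 with hcrit | ⟨σ₁, hσ₁W, hGS1, hne1⟩
      · exfalso
        by_cases hva : v₀ = am
        · have hmem := mem_W_type1 (a := a) (b := b) (C := A ∩ B) (WA := WA) (WB := WB)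
            hpr (isMin_min' hδ₁ne)
          rw [hc2] at hmem
          exact (hcrit _ hmem).2 (by rw [hτeq, hva])
        · by_cases hvv : v₀ = vm
          · have ham' : am ≠ vm := fun h => hva (hvv.trans h.symm)
            have hmem := mem_W_type2 (a := a) (b := b) (C := A ∩ B) (WA := WA) (WB := WB)
              hpr (v := am) hvmisMin (isMin_min' hδ₁ne)
              (by rw [hc2]; exact hamγ) ham'
            rw [hc2, if_pos rfl] at hmem
            exact (hcrit _ hmem).2 (by rw [hτeq, hvv])
          · have hmem := mem_W_type2 (a := a) (b := b) (C := A ∩ B) (WA := WA) (WB := WB)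
              hpr (v := v₀) hvmisMin (isMin_min' hδ₁ne)
              (by rw [hc2]; exact hv₀γ) hvv
            rw [hc2, if_neg hva] at hmem
            exact (hcrit _ hmem).2 hτeq.symm
      · rw [hτeq] at hσ₁W
        rcases pair_into_mixA hai hbi hab hci hWAd hWBd hWCd hCne hv₀γ hσ₁W with
          ⟨pr', hpr', hp2', hisMin, hσ₁eq⟩ | ⟨pr', hpr', hp2', u, vm', am', hvm', ham', hu,
            hune, hρ, hveq⟩ | ⟨pr', hpr', hp1', _, _⟩ | ⟨_, hcrit', _, hρ⟩
        · have hpe : pr' = pr := roleEx22 hci hWCd hCne hpr' hpr (hp2'.trans hc2.symm)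
          subst hpe
          have hva : v₀ = am := isMin_eq_min' hδ₁ne hisMin
          refine ⟨hva, ?_⟩
          intro hcon
          exact hne1 (by rw [hcon, hσ₁eq, hva])
        · exfalso
          apply hGS1
          rw [hρ, GS_mixB hai hbi hab hu, hGSτ]
        · exact absurd (hp1'.trans hc2.symm) (fun h => roleEx12 hci hWCd hCne hpr' hpr h)
        · exact absurd hc2 (fun h => critEx2 hci hWCd hCne hcrit' hpr h)
    obtain ⟨hv₀am, hσ₂ne⟩ := hbranch
    -- common facts
    have hHB' : ∀ j, 0 < j → j < γ.card → pivFn γ hγne j ≠ am →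
        ∀ τ', (mixB a b γ (pivFn γ hγne j), τ') ∈ Wfield a b c (A ∩ B) WA WB WC →
          τ' = mixA a b γ (pivFn γ hγne j) := by
      intro j hj hjn hja τ' hmem
      have hminw : ∃ t ∈ γ, t < pivFn γ hγne j :=
        ⟨pivFn γ hγne 0, hpm 0, pivFn_lt hγne (by omega) hjn⟩
      rcases pair_from_mixB hai hbi hab hci hWAd hWBd hWCd hCne (hpm j) hminw hmem with
        ⟨pr', hpr', hp2', vm', am', hvm', ham', hτ'eq⟩ | ⟨pr', hpr', hp1', hτ'eq⟩ |
        ⟨_, hcrit', hτ'eq⟩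
      · have hpe : pr' = pr := roleEx22 hci hWCd hCne hpr' hpr (hp2'.trans hc2.symm)
        subst hpe
        have h1 : am' = am := isMin_eq_min' hδ₁ne ham'
        rw [hτ'eq, h1, if_neg hja]
      · exact absurd (hp1'.trans hc2.symm) (fun h => (roleEx12 hci hWCd hCne hpr' hpr h).elim)
      · exact absurd hc2 (fun h => (critEx2 hci hWCd hCne hcrit' hpr h).elim)
    have hHA' : ∀ j, 0 < j → j < γ.card → pivFn γ hγne j ≠ am →
        (mixB a b γ (pivFn γ hγne j), mixA a b γ (pivFn γ hγne j)) ∈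
          Wfield a b c (A ∩ B) WA WB WC := by
      intro j hj hjn hja
      have hne : pivFn γ hγne j ≠ vm := by
        intro hcon
        rw [hvmdef, ← pivFn_zero hγne] at hcon
        have := pivFn_inj hγne hjn (by omega) hcon
        omega
      have hmem := mem_W_type2 (a := a) (b := b) (C := A ∩ B) (WA := WA) (WB := WB)
        hpr (v := pivFn γ hγne j) hvmisMin (isMin_min' hδ₁ne)
        (by rw [hc2]; exact hpm j) hne
      rw [hc2, if_neg hja] at hmem
      exact hmem
    have hσnm : ∀ j, j < γ.card →
        (σ₂, mixA a b γ (pivFn γ hγne j)) ∉ Wfield a b c (A ∩ B) WA WB WC := by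
      intro j hjn hmem
      rcases pair_into_mixA hai hbi hab hci hWAd hWBd hWCd hCne (hpm j) hmem with
        ⟨pr', hpr', hp2', hisMin, hσ₂'⟩ | ⟨pr', hpr', hp2', u, vm', am', hvm', ham', hu,
          hune, hρ, hveq⟩ | ⟨pr', hpr', hp1', _, _⟩ | ⟨_, hcrit', _, hρ⟩
      · have hpe : pr' = pr := roleEx22 hci hWCd hCne hpr' hpr (hp2'.trans hc2.symm)
        subst hpe
        have hja : pivFn γ hγne j = am := isMin_eq_min' hδ₁ne hisMin
        exact hσ₂ne (by rw [hσ₂', hja])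
      · rw [hσeq] at hρ
        exact mixA_ne_mixB hai hbi hab hwδ hρ
      · exact absurd (hp1'.trans hc2.symm) (fun h => roleEx12 hci hWCd hCne hpr' hpr h)
      · exact absurd hc2 (fun h => critEx2 hci hWCd hCne hcrit' hpr h)
    by_cases hamvm : am = vm
    · -- p₀ = 0
      have hτpiv : τ₁ = mixA a b γ (pivFn γ hγne 0) := by
        rw [hτeq, hv₀am, hamvm, hvmdef, pivFn_zero]
      have hja : ∀ j, 0 < j → j < γ.card → pivFn γ hγne j ≠ am := by
        intro j hj hjn hcon
        rw [hamvm, hvmdef, ← pivFn_zero hγne] at hcon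
        have := pivFn_inj hγne hjn (by omega) hcon
        omega
      exact generic_unique hai hbi hab hγne hδγ hδcard hwδ hτpiv hσeq
        (by omega) hpw hw (fun j hj hjn => hHA' j hj hjn (hja j hj hjn))
        (fun j hj hjn => hHB' j hj hjn (hja j hj hjn)) hσnm Hpa Hpb (Or.inl rfl)
    · -- p₀ = 1
      have hvmδ₁ : vm ∉ pull c pr.1 := by
        intro h
        exact hamvm (le_antisymm ((pull c pr.1).min'_le vm h) (γ.min'_le am hamγ))
      have h2n : 1 < γ.card :=
        Finset.one_lt_card.2 ⟨am, hamγ, vm, γ.min'_mem hγne, hamvm⟩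
      have hvm0 : vm = pivFn γ hγne 0 := (pivFn_zero hγne).symm
      have hδ₁eq : pull c pr.1 = γ.erase vm := by
        apply Finset.eq_of_subset_of_card_le
        · intro x hx
          exact Finset.mem_erase.2 ⟨fun h => hvmδ₁ (h ▸ hx), hδ₁γ hx⟩
        · rw [Finset.card_erase_of_mem (γ.min'_mem hγne)]
          omega
      have hampiv : am = pivFn γ hγne 1 := by
        have hp1ne : pivFn γ hγne 1 ≠ vm := by
          intro hcon
          rw [hvm0] at hcon
          have := pivFn_inj hγne h2n (by omega) hcon
          omega
        have hp1δ₁ : pivFn γ hγne 1 ∈ pull c pr.1 := by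
          rw [hδ₁eq]
          exact Finset.mem_erase.2 ⟨hp1ne, hpm 1⟩
        have hle1 : am ≤ pivFn γ hγne 1 := (pull c pr.1).min'_le _ hp1δ₁
        have hle2 : pivFn γ hγne 1 ≤ am := by
          obtain ⟨m, hm, hmam⟩ := pivFn_surj hγne hamγ
          have hm0 : m ≠ 0 := by
            intro hcon
            subst hcon
            exact hamvm (by rw [hmam, ← hvm0])
          rcases Nat.lt_or_ge 1 m with h' | h'
          · rw [hmam]
            exact le_of_lt (pivFn_lt hγne h' hm)
          · have : m = 1 := by omega
            rw [hmam, this]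
        exact le_antisymm hle1 hle2
      have hτpiv : τ₁ = mixA a b γ (pivFn γ hγne 1) := by
        rw [hτeq, hv₀am, hampiv]
      have hja1 : ∀ j, 1 < j → j < γ.card → pivFn γ hγne j ≠ am := by
        intro j hj hjn hcon
        rw [hampiv] at hcon
        have := pivFn_inj hγne hjn (by omega) hcon
        omega
      have hdmem : (mixB a b γ (pivFn γ hγne 1), mixA a b γ (pivFn γ hγne 0)) ∈
          Wfield a b c (A ∩ B) WA WB WC := by
        have hmem := mem_W_type2 (a := a) (b := b) (C := A ∩ B) (WA := WA) (WB := WB)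
          hpr (v := am) hvmisMin (isMin_min' hδ₁ne) (by rw [hc2]; exact hamγ) hamvm
        rw [hc2, if_pos rfl] at hmem
        rw [hampiv, hvm0] at hmem
        exact hmem
      have hduniq : ∀ τ', (mixB a b γ (pivFn γ hγne 1), τ') ∈
          Wfield a b c (A ∩ B) WA WB WC → τ' = mixA a b γ (pivFn γ hγne 0) := by
        intro τ' hmem
        have hminw : ∃ t ∈ γ, t < pivFn γ hγne 1 :=
          ⟨pivFn γ hγne 0, hpm 0, pivFn_lt hγne (by omega) h2n⟩
        rcases pair_from_mixB hai hbi hab hci hWAd hWBd hWCd hCne (hpm 1) hminw hmem with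
          ⟨pr', hpr', hp2', vm', am', hvm', ham', hτ'eq⟩ | ⟨pr', hpr', hp1', hτ'eq⟩ |
          ⟨_, hcrit', hτ'eq⟩
        · have hpe : pr' = pr := roleEx22 hci hWCd hCne hpr' hpr (hp2'.trans hc2.symm)
          subst hpe
          have h1 : am' = am := isMin_eq_min' hδ₁ne ham'
          have h2 : vm' = vm := isMin_eq_min' hγne hvm'
          rw [hτ'eq, h1, if_pos hampiv.symm, h2, hvm0]
        · exact absurd (hp1'.trans hc2.symm)
            (fun h => (roleEx12 hci hWCd hCne hpr' hpr h).elim)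
        · exact absurd hc2 (fun h => (critEx2 hci hWCd hCne hcrit' hpr h).elim)
      exact generic_unique hai hbi hab hγne hδγ hδcard hwδ hτpiv hσeq
        h2n hpw hw (fun j hj hjn => hHA' j (by omega) hjn (hja1 j hj hjn))
        (fun j hj hjn => hHB' j (by omega) hjn (hja1 j hj hjn)) hσnm Hpa Hpb
        (Or.inr ⟨rfl, hdmem, hduniq⟩)

end DMT
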